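/- arXiv:2309.15257 — 4 statements merged into one kernel-verified Lean document; each statement's English description precedes it below -/
import Mathlib

section
/- Every STARC metric d is sound: there exists a positive constant U such that for all reward functions R1, R2 and all policies π1, π2 with J_{R2}(π2) ≥ J_{R2}(π1), it holds that J_{R1}(π1) − J_{R1}(π2) ≤ U · (max_π J_{R1}(π) − min_π J_{R1}(π)) · d(R1,R2). -/
namespace RewardPaper

/-- A probability distribution on a finite type, represented as a function. -/
def IsDist {X : Type*} [Fintype X] (p : X → ℝ) : Prop :=
  (∀ x, 0 ≤ p x) ∧ (∑ x, p x) = 1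

/-- Reward functions on `S × A × S`. -/
abbrev Reward (S A : Type*) := S → A → S → ℝ

/-- A policy assigns to each state a probability distribution over actions. -/
def IsPolicy {S A : Type*} [Fintype A] (π : S → A → ℝ) : Prop := ∀ s, IsDist (π s)

/-- The type of policies. -/
abbrev Policy (S A : Type*) [Fintype A] := {π : S → A → ℝ // IsPolicy π}

/-- The distribution over states at time `t` of the Markov chain induced by
`τ`, `μ0` and the policy `π`. -/
noncomputable def stateDist {S A : Type*} [Fintype S] [Fintype A]
    (τ : S → A → S → ℝ) (μ0 : S → ℝ) (π : S → A → ℝ) : ℕ → S → ℝ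
  | 0 => μ0
  | (t + 1) => fun s' => ∑ s, ∑ a, stateDist τ μ0 π t s * π s a * τ s a s'

/-- Policy evaluation function `J_R(π)`: expected discounted return of `π` under `R`. -/
noncomputable def J {S A : Type*} [Fintype S] [Fintype A]
    (τ : S → A → S → ℝ) (μ0 : S → ℝ) (γ : ℝ) (R : Reward S A)
    (π : S → A → ℝ) : ℝ :=
  ∑' t : ℕ, γ ^ t * ∑ s, ∑ a, ∑ s', stateDist τ μ0 π t s * π s a * τ s a s' * R s a s'

/-- The value function `V^π_R(s)`: expected discounted return starting from `s`. -/
noncomputable def V {S A : Type*} [Fintype S] [Fintype A] [DecidableEq S]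
    (τ : S → A → S → ℝ) (γ : ℝ) (R : Reward S A) (π : S → A → ℝ) (s : S) : ℝ :=
  J τ (fun s0 => if s0 = s then 1 else 0) γ R π

/-- Every state is reachable with positive probability under `τ` from `μ0`. -/
def AllReachable {S A : Type*} [Fintype S] [Fintype A]
    (τ : S → A → S → ℝ) (μ0 : S → ℝ) : Prop :=
  ∀ s, ∃ (π : S → A → ℝ) (t : ℕ), IsPolicy π ∧ 0 < stateDist τ μ0 π t s

/-- `R2` is produced by potential shaping of `R1`. -/
def PotentialShaping {S A : Type*} (γ : ℝ) (R1 R2 : Reward S A) : Prop :=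
  ∃ Φ : S → ℝ, ∀ s a s', R2 s a s' = R1 s a s' + γ * Φ s' - Φ s

/-- `R1` and `R2` differ by S'-redistribution with respect to `τ`. -/
def SRedist {S A : Type*} [Fintype S] (τ : S → A → S → ℝ) (R1 R2 : Reward S A) : Prop :=
  ∀ s a, (∑ s', τ s a s' * R1 s a s') = (∑ s', τ s a s' * R2 s a s')

/-- `R1` and `R2` differ by (a composition of) potential shaping and S'-redistribution. -/
def DifferBy {S A : Type*} [Fintype S] (γ : ℝ) (τ : S → A → S → ℝ)
    (R1 R2 : Reward S A) : Prop :=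
  ∃ R' : Reward S A, PotentialShaping γ R1 R' ∧ SRedist τ R' R2

/-- A canonicalisation function. -/
def IsCanon {S A : Type*} [Fintype S] (γ : ℝ) (τ : S → A → S → ℝ)
    (c : Reward S A → Reward S A) : Prop :=
  IsLinearMap ℝ c ∧ (∀ R, DifferBy γ τ R (c R)) ∧
    ∀ R1 R2, c R1 = c R2 ↔ DifferBy γ τ R1 R2

/-- `n` is a norm on the subset `X` of reward space. -/
def IsNormOn {S A : Type*} (X : Set (Reward S A)) (n : Reward S A → ℝ) : Prop :=
  (∀ x ∈ X, 0 ≤ n x) ∧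
  (∀ x ∈ X, (n x = 0 ↔ x = 0)) ∧
  (∀ x ∈ X, ∀ r : ℝ, n (r • x) = |r| * n x) ∧
  (∀ x ∈ X, ∀ y ∈ X, n (x + y) ≤ n x + n y)

/-- `p` is a norm on all of reward space. -/
def IsNorm {S A : Type*} (p : Reward S A → ℝ) : Prop := IsNormOn Set.univ p

/-- `m` is a metric on the subset `X` of reward space. -/
def IsMetricOn {S A : Type*} (X : Set (Reward S A)) (m : Reward S A → Reward S A → ℝ) : Prop :=
  (∀ x ∈ X, m x x = 0) ∧ (∀ x ∈ X, ∀ y ∈ X, 0 ≤ m x y) ∧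
  (∀ x ∈ X, ∀ y ∈ X, m x y = m y x) ∧
  (∀ x ∈ X, ∀ y ∈ X, ∀ z ∈ X, m x z ≤ m x y + m y z)

/-- `m` is an admissible metric on `X`: a metric bilipschitz equivalent to some norm. -/
def IsAdmissibleOn {S A : Type*} (X : Set (Reward S A))
    (m : Reward S A → Reward S A → ℝ) : Prop :=
  IsMetricOn X m ∧
  ∃ (p : Reward S A → ℝ) (l u : ℝ), IsNorm p ∧ 0 < l ∧ 0 < u ∧
    ∀ x ∈ X, ∀ y ∈ X, l * p (x - y) ≤ m x y ∧ m x y ≤ u * p (x - y)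

/-- `d` is a STARC metric. -/
def IsSTARC {S A : Type*} [Fintype S] (γ : ℝ) (τ : S → A → S → ℝ)
    (d : Reward S A → Reward S A → ℝ) : Prop :=
  ∃ (c : Reward S A → Reward S A) (n : Reward S A → ℝ)
    (m : Reward S A → Reward S A → ℝ) (s : Reward S A → Reward S A),
    IsCanon γ τ c ∧ IsNormOn (Set.range c) n ∧
    (∀ R, (n (c R) = 0 → s R = c R) ∧ (n (c R) ≠ 0 → s R = (n (c R))⁻¹ • c R)) ∧
    IsAdmissibleOn (Set.range s) m ∧
    ∀ R1 R2, d R1 R2 = m (s R1) (s R2)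

/-- An EPIC-like canonicalisation function: standardises potential shaping only. -/
def IsEpicLikeCanon {S A : Type*} (γ : ℝ) (c : Reward S A → Reward S A) : Prop :=
  IsLinearMap ℝ c ∧ (∀ R, PotentialShaping γ R (c R)) ∧
    ∀ R1 R2, c R1 = c R2 ↔ PotentialShaping γ R1 R2

/-- `d` is an EPIC-like metric. -/
def IsEpicLike {S A : Type*} (γ : ℝ) (d : Reward S A → Reward S A → ℝ) : Prop :=
  ∃ (c : Reward S A → Reward S A) (n : Reward S A → ℝ)
    (m : Reward S A → Reward S A → ℝ) (s : Reward S A → Reward S A),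
    IsEpicLikeCanon γ c ∧ IsNormOn (Set.range c) n ∧
    (∀ R, (n (c R) = 0 → s R = c R) ∧ (n (c R) ≠ 0 → s R = (n (c R))⁻¹ • c R)) ∧
    IsAdmissibleOn (Set.range c) m ∧
    ∀ R1 R2, d R1 R2 = m (s R1) (s R2)

/-- The maximal value of `J_R` over all policies. -/
noncomputable def maxJ {S A : Type*} [Fintype S] [Fintype A]
    (τ : S → A → S → ℝ) (μ0 : S → ℝ) (γ : ℝ) (R : Reward S A) : ℝ :=
  ⨆ π : Policy S A, J τ μ0 γ R π.1

/-- The minimal value of `J_R` over all policies. -/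
noncomputable def minJ {S A : Type*} [Fintype S] [Fintype A]
    (τ : S → A → S → ℝ) (μ0 : S → ℝ) (γ : ℝ) (R : Reward S A) : ℝ :=
  ⨅ π : Policy S A, J τ μ0 γ R π.1

/-- `R1` and `R2` induce the same ordering of policies. -/
def SameOrder {S A : Type*} [Fintype S] [Fintype A]
    (τ : S → A → S → ℝ) (μ0 : S → ℝ) (γ : ℝ) (R1 R2 : Reward S A) : Prop :=
  ∀ π π' : Policy S A,
    (J τ μ0 γ R1 π.1 ≤ J τ μ0 γ R1 π'.1 ↔ J τ μ0 γ R2 π.1 ≤ J τ μ0 γ R2 π'.1)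

/-- Soundness of a pseudometric on reward space. -/
def Sound {S A : Type*} [Fintype S] [Fintype A]
    (τ : S → A → S → ℝ) (μ0 : S → ℝ) (γ : ℝ)
    (d : Reward S A → Reward S A → ℝ) : Prop :=
  ∃ U : ℝ, 0 < U ∧ ∀ (R1 R2 : Reward S A) (π1 π2 : Policy S A),
    J τ μ0 γ R2 π1.1 ≤ J τ μ0 γ R2 π2.1 →
    J τ μ0 γ R1 π1.1 - J τ μ0 γ R1 π2.1 ≤
      U * (maxJ τ μ0 γ R1 - minJ τ μ0 γ R1) * d R1 R2

/-- Completeness of a pseudometric on reward space. -/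
def Complete {S A : Type*} [Fintype S] [Fintype A]
    (τ : S → A → S → ℝ) (μ0 : S → ℝ) (γ : ℝ)
    (d : Reward S A → Reward S A → ℝ) : Prop :=
  (∃ L : ℝ, 0 < L ∧ ∀ R1 R2 : Reward S A, ∃ π1 π2 : Policy S A,
    J τ μ0 γ R2 π1.1 ≤ J τ μ0 γ R2 π2.1 ∧
    L * (maxJ τ μ0 γ R1 - minJ τ μ0 γ R1) * d R1 R2 ≤
      J τ μ0 γ R1 π1.1 - J τ μ0 γ R1 π2.1) ∧
  ∀ R1 R2 : Reward S A, SameOrder τ μ0 γ R1 R2 → d R1 R2 = 0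

/-- `d` is a pseudometric on reward space. -/
def IsPseudometric {S A : Type*} (d : Reward S A → Reward S A → ℝ) : Prop :=
  (∀ x, d x x = 0) ∧ (∀ x y, 0 ≤ d x y) ∧ (∀ x y, d x y = d y x) ∧
    ∀ x y z, d x z ≤ d x y + d y z

/-- The EPIC canonicalisation. -/
noncomputable def CEpic {S A : Type*} [Fintype S] [Fintype A]
    (DS : S → ℝ) (DA : A → ℝ) (γ : ℝ) (R : Reward S A) : Reward S A :=
  fun s a s' =>
    R s a s'
      + γ * (∑ a', ∑ σ', DA a' * DS σ' * R s' a' σ')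
      - (∑ a', ∑ σ', DA a' * DS σ' * R s a' σ')
      - γ * (∑ σ, ∑ a', ∑ σ', DS σ * DA a' * DS σ' * R σ a' σ')

/-- Mean of `f(S,A,S')` with `S,S' ~ DS` and `A ~ DA` independent. -/
noncomputable def meanD {S A : Type*} [Fintype S] [Fintype A]
    (DS : S → ℝ) (DA : A → ℝ) (f : Reward S A) : ℝ :=
  ∑ s, ∑ a, ∑ s', DS s * DA a * DS s' * f s a s'

/-- Covariance of `f(S,A,S')` and `g(S,A,S')`. -/
noncomputable def covD {S A : Type*} [Fintype S] [Fintype A]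
    (DS : S → ℝ) (DA : A → ℝ) (f g : Reward S A) : ℝ :=
  ∑ s, ∑ a, ∑ s', DS s * DA a * DS s' *
    (f s a s' - meanD DS DA f) * (g s a s' - meanD DS DA g)

/-- Variance of `f(S,A,S')`. -/
noncomputable def varD {S A : Type*} [Fintype S] [Fintype A]
    (DS : S → ℝ) (DA : A → ℝ) (f : Reward S A) : ℝ :=
  covD DS DA f f

/-- Pearson correlation of `f(S,A,S')` and `g(S,A,S')`. -/
noncomputable def pearsonD {S A : Type*} [Fintype S] [Fintype A]
    (DS : S → ℝ) (DA : A → ℝ) (f g : Reward S A) : ℝ :=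
  covD DS DA f g / (Real.sqrt (varD DS DA f) * Real.sqrt (varD DS DA g))

/-- The EPIC distance. -/
noncomputable def DEpic {S A : Type*} [Fintype S] [Fintype A]
    (DS : S → ℝ) (DA : A → ℝ) (γ : ℝ) (R1 R2 : Reward S A) : ℝ :=
  Real.sqrt ((1 - pearsonD DS DA (CEpic DS DA γ R1) (CEpic DS DA γ R2)) / 2)

/-- The DARD canonicalisation. -/
noncomputable def CDard {S A : Type*} [Fintype S] [Fintype A]
    (τ : S → A → S → ℝ) (DA : A → ℝ) (γ : ℝ) (R : Reward S A) : Reward S A :=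
  fun s a s' =>
    R s a s' + ∑ a', DA a' *
      (γ * (∑ σ'', τ s' a' σ'' * R s' a' σ'')
        - (∑ σ', τ s a' σ' * R s a' σ')
        - γ * (∑ σ', ∑ σ'', τ s a' σ' * τ s' a' σ'' * R σ' a' σ''))

/-- The DARD distance. -/
noncomputable def DDard {S A : Type*} [Fintype S] [Fintype A]
    (τ : S → A → S → ℝ) (DS : S → ℝ) (DA : A → ℝ) (γ : ℝ) (R1 R2 : Reward S A) : ℝ :=
  Real.sqrt ((1 - pearsonD DS DA (CDard τ DA γ R1) (CDard τ DA γ R2)) / 2)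

/-- The (unweighted) L2 norm on reward space. -/
noncomputable def l2Norm {S A : Type*} [Fintype S] [Fintype A] (R : Reward S A) : ℝ :=
  Real.sqrt (∑ s, ∑ a, ∑ s', (R s a s') ^ 2)

/-- A weighted L2 norm on reward space. -/
noncomputable def weightedL2 {S A : Type*} [Fintype S] [Fintype A]
    (w : S → A → S → ℝ) (R : Reward S A) : ℝ :=
  Real.sqrt (∑ s, ∑ a, ∑ s', w s a s' * (R s a s') ^ 2)

/-- The L2 norm weighted by the product distribution `DS ⊗ DA ⊗ DS`. -/
noncomputable def l2NormD {S A : Type*} [Fintype S] [Fintype A]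
    (DS : S → ℝ) (DA : A → ℝ) (R : Reward S A) : ℝ :=
  Real.sqrt (∑ s, ∑ a, ∑ s', DS s * DA a * DS s' * (R s a s') ^ 2)

/-- Expected discounted return of a reward function along a sequence of per-timestep
transition distributions. -/
noncomputable def Eret {S A : Type*} [Fintype S] [Fintype A]
    (γ : ℝ) (R : Reward S A) (p : ℕ → (S × A × S) → ℝ) : ℝ :=
  ∑' t : ℕ, γ ^ t * ∑ x : S × A × S, p t x * R x.1 x.2.1 x.2.2

/-! ### Auxiliary development for the soundness theorem -/

section Aux

variable {S A : Type*} [Fintype S] [Fintype A]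

/-- The per-timestep expected reward. -/
noncomputable def stepE (τ : S → A → S → ℝ) (μ0 : S → ℝ) (π : S → A → ℝ)
    (F : Reward S A) (t : ℕ) : ℝ :=
  ∑ s, ∑ a, ∑ s', stateDist τ μ0 π t s * π s a * τ s a s' * F s a s'

lemma J_eq_tsum_stepE (τ : S → A → S → ℝ) (μ0 : S → ℝ) (γ : ℝ) (F : Reward S A)
    (π : S → A → ℝ) : J τ μ0 γ F π = ∑' t : ℕ, γ ^ t * stepE τ μ0 π F t := rfl

/-- The L1 norm. -/
noncomputable def l1 (F : Reward S A) : ℝ := ∑ s, ∑ a, ∑ s', |F s a s'|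

lemma l1_nonneg (F : Reward S A) : 0 ≤ l1 F := by
  refine Finset.sum_nonneg fun s _ => Finset.sum_nonneg fun a _ =>
    Finset.sum_nonneg fun s' _ => abs_nonneg _

variable {τ : S → A → S → ℝ} {μ0 : S → ℝ} {π : S → A → ℝ}

lemma stateDist_nonneg (hτ : ∀ s a, IsDist (τ s a)) (hμ0 : ∀ s, 0 ≤ μ0 s)
    (hπ : IsPolicy π) : ∀ t s, 0 ≤ stateDist τ μ0 π t s := by
  intro t
  induction t with
  | zero => exact hμ0
  | succ t ih =>
    intro s'
    refine Finset.sum_nonneg fun s _ => Finset.sum_nonneg fun a _ => ?_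
    exact mul_nonneg (mul_nonneg (ih s) ((hπ s).1 a)) ((hτ s a).1 s')

lemma stateDist_sum_one (hτ : ∀ s a, IsDist (τ s a)) (hμ0 : IsDist μ0)
    (hπ : IsPolicy π) : ∀ t, ∑ s, stateDist τ μ0 π t s = 1 := by
  intro t
  induction t with
  | zero => exact hμ0.2
  | succ t ih =>
    show ∑ s', ∑ s, ∑ a, stateDist τ μ0 π t s * π s a * τ s a s' = 1
    rw [Finset.sum_comm]
    have : ∀ s, ∑ s', ∑ a, stateDist τ μ0 π t s * π s a * τ s a s'
        = stateDist τ μ0 π t s := by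
      intro s
      rw [Finset.sum_comm]
      have : ∀ a, ∑ s', stateDist τ μ0 π t s * π s a * τ s a s'
          = stateDist τ μ0 π t s * π s a := by
        intro a
        rw [← Finset.mul_sum, (hτ s a).2, mul_one]
      rw [Finset.sum_congr rfl fun a _ => this a, ← Finset.mul_sum, (hπ s).2, mul_one]
    rw [Finset.sum_congr rfl fun s _ => this s, ih]

lemma stateDist_le_one (hτ : ∀ s a, IsDist (τ s a)) (hμ0 : IsDist μ0)
    (hπ : IsPolicy π) (t : ℕ) (s : S) : stateDist τ μ0 π t s ≤ 1 := by
  calc stateDist τ μ0 π t s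
      ≤ ∑ s', stateDist τ μ0 π t s' :=
        Finset.single_le_sum (fun s' _ => stateDist_nonneg hτ hμ0.1 hπ t s')
          (Finset.mem_univ s)
    _ = 1 := stateDist_sum_one hτ hμ0 hπ t

lemma abs_stepE_le (hτ : ∀ s a, IsDist (τ s a)) (hμ0 : IsDist μ0)
    (hπ : IsPolicy π) (F : Reward S A) (t : ℕ) :
    |stepE τ μ0 π F t| ≤ l1 F := by
  have h1 : |stepE τ μ0 π F t| ≤
      ∑ s, ∑ a, ∑ s', |stateDist τ μ0 π t s * π s a * τ s a s' * F s a s'| := by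
    refine (Finset.abs_sum_le_sum_abs _ _).trans ?_
    refine Finset.sum_le_sum fun s _ => ?_
    refine (Finset.abs_sum_le_sum_abs _ _).trans ?_
    exact Finset.sum_le_sum fun a _ => Finset.abs_sum_le_sum_abs _ _
  refine h1.trans ?_
  refine Finset.sum_le_sum fun s _ => Finset.sum_le_sum fun a _ =>
    Finset.sum_le_sum fun s' _ => ?_
  have hw0 : 0 ≤ stateDist τ μ0 π t s * π s a * τ s a s' :=
    mul_nonneg (mul_nonneg (stateDist_nonneg hτ hμ0.1 hπ t s) ((hπ s).1 a)) ((hτ s a).1 s')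
  have hw1 : stateDist τ μ0 π t s * π s a * τ s a s' ≤ 1 := by
    have h3 : stateDist τ μ0 π t s ≤ 1 := stateDist_le_one hτ hμ0 hπ t s
    have h4 : π s a ≤ 1 := by
      calc π s a ≤ ∑ a', π s a' :=
            Finset.single_le_sum (fun a' _ => (hπ s).1 a') (Finset.mem_univ a)
        _ = 1 := (hπ s).2
    have h5 : τ s a s' ≤ 1 := by
      calc τ s a s' ≤ ∑ σ, τ s a σ :=
            Finset.single_le_sum (fun σ _ => (hτ s a).1 σ) (Finset.mem_univ s')
        _ = 1 := (hτ s a).2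
    have h6 : 0 ≤ stateDist τ μ0 π t s := stateDist_nonneg hτ hμ0.1 hπ t s
    have h7 : 0 ≤ π s a := (hπ s).1 a
    have h8 : 0 ≤ τ s a s' := (hτ s a).1 s'
    have h9 : stateDist τ μ0 π t s * π s a ≤ 1 := by nlinarith
    nlinarith
  rw [abs_mul, abs_of_nonneg hw0]
  calc (stateDist τ μ0 π t s * π s a * τ s a s') * |F s a s'| ≤ 1 * |F s a s'| := by
        gcongr
    _ = |F s a s'| := one_mul _

lemma summable_geom_aux {γ : ℝ} (hγ : γ ∈ Set.Ioo (0:ℝ) 1) {f : ℕ → ℝ} {M : ℝ}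
    (hM : ∀ t, |f t| ≤ M) : Summable (fun t => γ ^ t * f t) := by
  refine Summable.of_norm_bounded (g := fun t => γ ^ t * M) ?_ ?_
  · exact (summable_geometric_of_lt_one hγ.1.le hγ.2).mul_right M
  · intro t
    rw [Real.norm_eq_abs, abs_mul, abs_pow, abs_of_pos hγ.1]
    exact mul_le_mul_of_nonneg_left (hM t) (pow_nonneg hγ.1.le t)

lemma summable_stepE (hτ : ∀ s a, IsDist (τ s a)) (hμ0 : IsDist μ0)
    (hπ : IsPolicy π) {γ : ℝ} (hγ : γ ∈ Set.Ioo (0:ℝ) 1) (F : Reward S A) :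
    Summable (fun t => γ ^ t * stepE τ μ0 π F t) :=
  summable_geom_aux hγ (abs_stepE_le hτ hμ0 hπ F)

lemma abs_J_le (hτ : ∀ s a, IsDist (τ s a)) (hμ0 : IsDist μ0)
    (hπ : IsPolicy π) {γ : ℝ} (hγ : γ ∈ Set.Ioo (0:ℝ) 1) (F : Reward S A) :
    |J τ μ0 γ F π| ≤ (1 - γ)⁻¹ * l1 F := by
  rw [J_eq_tsum_stepE]
  have h1 : |∑' t : ℕ, γ ^ t * stepE τ μ0 π F t| ≤ ∑' t : ℕ, γ ^ t * l1 F := by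
    refine le_trans (norm_tsum_le_tsum_norm (f := fun t => γ ^ t * stepE τ μ0 π F t) ?_) ?_
    · exact (summable_stepE hτ hμ0 hπ hγ F).abs
    refine Summable.tsum_le_tsum ?_ ((summable_stepE hτ hμ0 hπ hγ F).abs) ?_
    · intro t
      rw [Real.norm_eq_abs, abs_mul, abs_pow, abs_of_pos hγ.1]
      exact mul_le_mul_of_nonneg_left (abs_stepE_le hτ hμ0 hπ F t)
        (pow_nonneg hγ.1.le t)
    · exact (summable_geometric_of_lt_one hγ.1.le hγ.2).mul_right _
  refine h1.trans_eq ?_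
  rw [tsum_mul_right, tsum_geometric_of_lt_one hγ.1.le hγ.2, mul_comm]

lemma stepE_add (F G : Reward S A) (t : ℕ) :
    stepE τ μ0 π (F + G) t = stepE τ μ0 π F t + stepE τ μ0 π G t := by
  unfold stepE
  rw [← Finset.sum_add_distrib]
  refine Finset.sum_congr rfl fun s _ => ?_
  rw [← Finset.sum_add_distrib]
  refine Finset.sum_congr rfl fun a _ => ?_
  rw [← Finset.sum_add_distrib]
  refine Finset.sum_congr rfl fun s' _ => ?_
  show _ * (F s a s' + G s a s') = _
  ring

lemma stepE_smul (r : ℝ) (F : Reward S A) (t : ℕ) :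
    stepE τ μ0 π (r • F) t = r * stepE τ μ0 π F t := by
  unfold stepE
  rw [Finset.mul_sum]
  refine Finset.sum_congr rfl fun s _ => ?_
  rw [Finset.mul_sum]
  refine Finset.sum_congr rfl fun a _ => ?_
  rw [Finset.mul_sum]
  refine Finset.sum_congr rfl fun s' _ => ?_
  show _ * (r * F s a s') = _
  ring

lemma J_add (hτ : ∀ s a, IsDist (τ s a)) (hμ0 : IsDist μ0) (hπ : IsPolicy π)
    {γ : ℝ} (hγ : γ ∈ Set.Ioo (0:ℝ) 1) (F G : Reward S A) :
    J τ μ0 γ (F + G) π = J τ μ0 γ F π + J τ μ0 γ G π := by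
  rw [J_eq_tsum_stepE, J_eq_tsum_stepE, J_eq_tsum_stepE,
    ← Summable.tsum_add (summable_stepE hτ hμ0 hπ hγ F) (summable_stepE hτ hμ0 hπ hγ G)]
  refine tsum_congr fun t => ?_
  rw [stepE_add]; ring

lemma J_smul {γ : ℝ} (r : ℝ) (F : Reward S A) :
    J τ μ0 γ (r • F) π = r * J τ μ0 γ F π := by
  rw [J_eq_tsum_stepE, J_eq_tsum_stepE, ← tsum_mul_left]
  refine tsum_congr fun t => ?_
  rw [stepE_smul]; ring

lemma J_sub (hτ : ∀ s a, IsDist (τ s a)) (hμ0 : IsDist μ0) (hπ : IsPolicy π)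
    {γ : ℝ} (hγ : γ ∈ Set.Ioo (0:ℝ) 1) (F G : Reward S A) :
    J τ μ0 γ (F - G) π = J τ μ0 γ F π - J τ μ0 γ G π := by
  have h : F - G = F + (-1 : ℝ) • G := by
    funext s a s'; show F s a s' - G s a s' = F s a s' + (-1) * G s a s'; ring
  rw [h, J_add hτ hμ0 hπ hγ, J_smul]; ring

/-! #### Potential shaping and S'-redistribution -/

/-- Expected potential at time `t`. -/
noncomputable def phiE (τ : S → A → S → ℝ) (μ0 : S → ℝ) (π : S → A → ℝ)
    (Φ : S → ℝ) (t : ℕ) : ℝ :=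
  ∑ s, stateDist τ μ0 π t s * Φ s

lemma abs_phiE_le (hτ : ∀ s a, IsDist (τ s a)) (hμ0 : IsDist μ0) (hπ : IsPolicy π)
    (Φ : S → ℝ) (t : ℕ) : |phiE τ μ0 π Φ t| ≤ ∑ s, |Φ s| := by
  refine (Finset.abs_sum_le_sum_abs _ _).trans ?_
  refine Finset.sum_le_sum fun s _ => ?_
  rw [abs_mul, abs_of_nonneg (stateDist_nonneg hτ hμ0.1 hπ t s)]
  calc stateDist τ μ0 π t s * |Φ s| ≤ 1 * |Φ s| :=
        mul_le_mul_of_nonneg_right (stateDist_le_one hτ hμ0 hπ t s) (abs_nonneg _)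
    _ = |Φ s| := one_mul _

lemma stepE_shaping (hτ : ∀ s a, IsDist (τ s a)) (hπ : IsPolicy π)
    {γ : ℝ} (Φ : S → ℝ) (t : ℕ) :
    stepE τ μ0 π (fun s _ s' => γ * Φ s' - Φ s) t
      = γ * phiE τ μ0 π Φ (t + 1) - phiE τ μ0 π Φ t := by
  have hsplit : stepE τ μ0 π (fun s _ s' => γ * Φ s' - Φ s) t
      = γ * (∑ s, ∑ a, ∑ s', stateDist τ μ0 π t s * π s a * τ s a s' * Φ s')
        - ∑ s, ∑ a, ∑ s', stateDist τ μ0 π t s * π s a * τ s a s' * Φ s := by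
    unfold stepE
    rw [Finset.mul_sum, ← Finset.sum_sub_distrib]
    refine Finset.sum_congr rfl fun s _ => ?_
    rw [Finset.mul_sum, ← Finset.sum_sub_distrib]
    refine Finset.sum_congr rfl fun a _ => ?_
    rw [Finset.mul_sum, ← Finset.sum_sub_distrib]
    refine Finset.sum_congr rfl fun s' _ => ?_
    ring
  rw [hsplit]
  congr 1
  · -- first piece is phiE at time t+1
    congr 1
    have e1 : phiE τ μ0 π Φ (t + 1)
        = ∑ s', (∑ s, ∑ a, stateDist τ μ0 π t s * π s a * τ s a s') * Φ s' := rfl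
    have e2 : ∀ s' : S, (∑ s, ∑ a, stateDist τ μ0 π t s * π s a * τ s a s') * Φ s'
        = ∑ s, ∑ a, stateDist τ μ0 π t s * π s a * τ s a s' * Φ s' := by
      intro s'
      rw [Finset.sum_mul]
      exact Finset.sum_congr rfl fun s _ => by rw [Finset.sum_mul]
    have comm3 : ∀ (f : S → A → S → ℝ), ∑ s, ∑ a, ∑ s', f s a s'
        = ∑ s', ∑ s, ∑ a, f s a s' := by
      intro f
      calc ∑ s, ∑ a, ∑ s', f s a s'
          = ∑ s, ∑ s', ∑ a, f s a s' :=
            Finset.sum_congr rfl fun s _ => Finset.sum_comm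
        _ = ∑ s', ∑ s, ∑ a, f s a s' := Finset.sum_comm
    rw [e1, Finset.sum_congr rfl fun s' _ => e2 s',
      comm3 (fun s a s' => stateDist τ μ0 π t s * π s a * τ s a s' * Φ s')]
  · -- second piece is phiE at time t
    unfold phiE
    refine Finset.sum_congr rfl fun s _ => ?_
    have h1 : ∀ a, ∑ s', stateDist τ μ0 π t s * π s a * τ s a s' * Φ s
        = stateDist τ μ0 π t s * π s a * Φ s := by
      intro a
      have : ∀ s', stateDist τ μ0 π t s * π s a * τ s a s' * Φ s
          = (stateDist τ μ0 π t s * π s a * Φ s) * τ s a s' := by intro s'; ring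
      rw [Finset.sum_congr rfl fun s' _ => this s', ← Finset.mul_sum, (hτ s a).2, mul_one]
    rw [Finset.sum_congr rfl fun a _ => h1 a]
    have : ∀ a, stateDist τ μ0 π t s * π s a * Φ s
        = (stateDist τ μ0 π t s * Φ s) * π s a := by intro a; ring
    rw [Finset.sum_congr rfl fun a _ => this a, ← Finset.mul_sum, (hπ s).2, mul_one]

lemma J_shaping_fun (hτ : ∀ s a, IsDist (τ s a)) (hμ0 : IsDist μ0) (hπ : IsPolicy π)
    {γ : ℝ} (hγ : γ ∈ Set.Ioo (0:ℝ) 1) (Φ : S → ℝ) :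
    J τ μ0 γ (fun s _ s' => γ * Φ s' - Φ s) π = -∑ s, μ0 s * Φ s := by
  set f : ℕ → ℝ := fun t => γ ^ t * phiE τ μ0 π Φ t with hf
  have hsf : Summable f := summable_geom_aux hγ (abs_phiE_le hτ hμ0 hπ Φ)
  have hsf1 : Summable (fun t => f (t + 1)) := (summable_nat_add_iff 1).2 hsf
  have hstep : ∀ t, γ ^ t * stepE τ μ0 π (fun s _ s' => γ * Φ s' - Φ s) t
      = f (t + 1) - f t := by
    intro t
    rw [stepE_shaping hτ hπ Φ t, hf]
    simp only []
    ring
  rw [J_eq_tsum_stepE, tsum_congr hstep, Summable.tsum_sub hsf1 hsf]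
  have h0 : ∑' t, f (t + 1) = (∑' t, f t) - f 0 := by
    rw [Summable.tsum_eq_zero_add hsf]; ring
  rw [h0]
  have : f 0 = ∑ s, μ0 s * Φ s := by
    simp only [hf, pow_zero, one_mul, phiE]
    rfl
  rw [this]; ring

lemma J_shaping (hτ : ∀ s a, IsDist (τ s a)) (hμ0 : IsDist μ0) (hπ : IsPolicy π)
    {γ : ℝ} (hγ : γ ∈ Set.Ioo (0:ℝ) 1) {R1 R2 : Reward S A} (Φ : S → ℝ)
    (h : ∀ s a s', R2 s a s' = R1 s a s' + γ * Φ s' - Φ s) :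
    J τ μ0 γ R2 π = J τ μ0 γ R1 π - ∑ s, μ0 s * Φ s := by
  have hR : R2 = R1 + (fun s _ s' => γ * Φ s' - Φ s) :=
    funext fun s => funext fun a => funext fun s' => by
      show R2 s a s' = R1 s a s' + (γ * Φ s' - Φ s)
      rw [h s a s']; ring
  rw [hR, J_add hτ hμ0 hπ hγ, J_shaping_fun hτ hμ0 hπ hγ]; ring

lemma J_sredist (hτ : ∀ s a, IsDist (τ s a)) {γ : ℝ} {R1 R2 : Reward S A}
    (h : SRedist τ R1 R2) : J τ μ0 γ R1 π = J τ μ0 γ R2 π := by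
  rw [J_eq_tsum_stepE, J_eq_tsum_stepE]
  refine tsum_congr fun t => ?_
  congr 1
  unfold stepE
  refine Finset.sum_congr rfl fun s _ => Finset.sum_congr rfl fun a _ => ?_
  have e : ∀ (R : Reward S A), ∑ s', stateDist τ μ0 π t s * π s a * τ s a s' * R s a s'
      = stateDist τ μ0 π t s * π s a * ∑ s', τ s a s' * R s a s' := by
    intro R
    rw [Finset.mul_sum]
    exact Finset.sum_congr rfl fun s' _ => by ring
  rw [e R1, e R2, h s a]

/-! #### Dependence on the initial distribution -/

/-- Dirac distribution. -/
def dirac {S : Type*} [DecidableEq S] (s0 : S) : S → ℝ := fun s => if s = s0 then 1 else 0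

lemma isDist_dirac [DecidableEq S] (s0 : S) : IsDist (dirac s0) := by
  constructor
  · intro s; unfold dirac; split <;> norm_num
  · simp [dirac]

lemma sum_swap3 (f : S → A → S → ℝ) :
    ∑ s, ∑ a, ∑ s', f s a s' = ∑ s', ∑ s, ∑ a, f s a s' :=
  calc ∑ s, ∑ a, ∑ s', f s a s'
      = ∑ s, ∑ s', ∑ a, f s a s' :=
        Finset.sum_congr rfl fun s _ => Finset.sum_comm
    _ = ∑ s', ∑ s, ∑ a, f s a s' := Finset.sum_comm

lemma sum_swap4 {X : Type*} [Fintype X] (g : S → A → S → X → ℝ) :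
    ∑ s, ∑ a, ∑ s', ∑ x, g s a s' x = ∑ x, ∑ s, ∑ a, ∑ s', g s a s' x :=
  calc ∑ s, ∑ a, ∑ s', ∑ x, g s a s' x
      = ∑ s, ∑ a, ∑ x, ∑ s', g s a s' x :=
        Finset.sum_congr rfl fun s _ => Finset.sum_congr rfl fun a _ => Finset.sum_comm
    _ = ∑ s, ∑ x, ∑ a, ∑ s', g s a s' x :=
        Finset.sum_congr rfl fun s _ => Finset.sum_comm
    _ = ∑ x, ∑ s, ∑ a, ∑ s', g s a s' x := Finset.sum_comm

lemma stateDist_mu_linear [DecidableEq S] :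
    ∀ t s, stateDist τ μ0 π t s = ∑ s0, μ0 s0 * stateDist τ (dirac s0) π t s := by
  intro t
  induction t with
  | zero =>
    intro s
    show μ0 s = ∑ s0, μ0 s0 * (if s = s0 then 1 else 0)
    simp
  | succ t ih =>
    intro s'
    show ∑ s, ∑ a, stateDist τ μ0 π t s * π s a * τ s a s' = _
    have e1 : ∀ s a, stateDist τ μ0 π t s * π s a * τ s a s'
        = ∑ s0, μ0 s0 * (stateDist τ (dirac s0) π t s * π s a * τ s a s') := by
      intro s a
      rw [ih s, Finset.sum_mul, Finset.sum_mul]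
      exact Finset.sum_congr rfl fun s0 _ => by ring
    calc ∑ s, ∑ a, stateDist τ μ0 π t s * π s a * τ s a s'
        = ∑ s, ∑ a, ∑ s0, μ0 s0 *
            (stateDist τ (dirac s0) π t s * π s a * τ s a s') := by
          exact Finset.sum_congr rfl fun s _ => Finset.sum_congr rfl fun a _ => e1 s a
      _ = ∑ s0, ∑ s, ∑ a, μ0 s0 *
            (stateDist τ (dirac s0) π t s * π s a * τ s a s') :=
          calc ∑ s, ∑ a, ∑ s0, (fun s a s0 => μ0 s0 *
                (stateDist τ (dirac s0) π t s * π s a * τ s a s')) s a s0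
              = ∑ s, ∑ s0, ∑ a, (fun s a s0 => μ0 s0 *
                (stateDist τ (dirac s0) π t s * π s a * τ s a s')) s a s0 :=
                Finset.sum_congr rfl fun s _ => Finset.sum_comm
            _ = ∑ s0, ∑ s, ∑ a, (fun s a s0 => μ0 s0 *
                (stateDist τ (dirac s0) π t s * π s a * τ s a s')) s a s0 :=
                Finset.sum_comm
      _ = ∑ s0, μ0 s0 * stateDist τ (dirac s0) π (t + 1) s' := by
          refine Finset.sum_congr rfl fun s0 _ => ?_
          show _ = μ0 s0 * ∑ s, ∑ a, stateDist τ (dirac s0) π t s * π s a * τ s a s'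
          rw [Finset.mul_sum]
          exact Finset.sum_congr rfl fun s _ => by rw [Finset.mul_sum]

lemma stepE_mu_linear [DecidableEq S] (F : Reward S A) (t : ℕ) :
    stepE τ μ0 π F t = ∑ s0, μ0 s0 * stepE τ (dirac s0) π F t := by
  unfold stepE
  have e1 : ∀ s a s', stateDist τ μ0 π t s * π s a * τ s a s' * F s a s'
      = ∑ s0, μ0 s0 * (stateDist τ (dirac s0) π t s * π s a * τ s a s' * F s a s') := by
    intro s a s'
    rw [stateDist_mu_linear t s, Finset.sum_mul, Finset.sum_mul, Finset.sum_mul]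
    exact Finset.sum_congr rfl fun s0 _ => by ring
  calc ∑ s, ∑ a, ∑ s', stateDist τ μ0 π t s * π s a * τ s a s' * F s a s'
      = ∑ s, ∑ a, ∑ s', ∑ s0, μ0 s0 *
          (stateDist τ (dirac s0) π t s * π s a * τ s a s' * F s a s') :=
        Finset.sum_congr rfl fun s _ => Finset.sum_congr rfl fun a _ =>
          Finset.sum_congr rfl fun s' _ => e1 s a s'
    _ = ∑ s0, ∑ s, ∑ a, ∑ s', μ0 s0 *
          (stateDist τ (dirac s0) π t s * π s a * τ s a s' * F s a s') :=
        sum_swap4 _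
    _ = ∑ s0, μ0 s0 * ∑ s, ∑ a, ∑ s',
          stateDist τ (dirac s0) π t s * π s a * τ s a s' * F s a s' := by
        refine Finset.sum_congr rfl fun s0 _ => ?_
        rw [Finset.mul_sum]
        refine Finset.sum_congr rfl fun s _ => ?_
        rw [Finset.mul_sum]
        refine Finset.sum_congr rfl fun a _ => ?_
        rw [Finset.mul_sum]

lemma J_mu_linear [DecidableEq S] (hτ : ∀ s a, IsDist (τ s a)) (hπ : IsPolicy π)
    {γ : ℝ} (hγ : γ ∈ Set.Ioo (0:ℝ) 1) (F : Reward S A) :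
    J τ μ0 γ F π = ∑ s0, μ0 s0 * J τ (dirac s0) γ F π := by
  rw [J_eq_tsum_stepE]
  have e1 : ∀ t : ℕ, γ ^ t * stepE τ μ0 π F t
      = ∑ s0, μ0 s0 * (γ ^ t * stepE τ (dirac s0) π F t) := by
    intro t
    rw [stepE_mu_linear F t, Finset.mul_sum]
    exact Finset.sum_congr rfl fun s0 _ => by ring
  rw [tsum_congr e1, Summable.tsum_finsetSum (fun s0 _ =>
    ((summable_stepE hτ (isDist_dirac s0) hπ hγ F).mul_left (μ0 s0)))]
  refine Finset.sum_congr rfl fun s0 _ => ?_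
  rw [tsum_mul_left, J_eq_tsum_stepE]

/-! #### One-step unfolding of `J` -/

lemma stateDist_succ_shift :
    ∀ t, stateDist τ μ0 π (t + 1) = stateDist τ (stateDist τ μ0 π 1) π t := by
  intro t
  induction t with
  | zero => rfl
  | succ t ih =>
    funext s'
    show ∑ s, ∑ a, stateDist τ μ0 π (t + 1) s * π s a * τ s a s' = _
    rw [ih]
    rfl

lemma isDist_stateDist (hτ : ∀ s a, IsDist (τ s a)) (hμ0 : IsDist μ0)
    (hπ : IsPolicy π) (t : ℕ) : IsDist (stateDist τ μ0 π t) :=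
  ⟨stateDist_nonneg hτ hμ0.1 hπ t, stateDist_sum_one hτ hμ0 hπ t⟩

lemma J_step (hτ : ∀ s a, IsDist (τ s a)) (hμ0 : IsDist μ0) (hπ : IsPolicy π)
    {γ : ℝ} (hγ : γ ∈ Set.Ioo (0:ℝ) 1) (F : Reward S A) :
    J τ μ0 γ F π = stepE τ μ0 π F 0 + γ * J τ (stateDist τ μ0 π 1) γ F π := by
  rw [J_eq_tsum_stepE, Summable.tsum_eq_zero_add (summable_stepE hτ hμ0 hπ hγ F)]
  congr 1
  · rw [pow_zero, one_mul]
  · have e1 : ∀ t : ℕ, stepE τ μ0 π F (t + 1) = stepE τ (stateDist τ μ0 π 1) π F t := by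
      intro t
      unfold stepE
      rw [stateDist_succ_shift]
    have e2 : ∀ t : ℕ, γ ^ (t + 1) * stepE τ μ0 π F (t + 1)
        = γ * (γ ^ t * stepE τ (stateDist τ μ0 π 1) π F t) := by
      intro t
      rw [e1 t, pow_succ]
      ring
    rw [tsum_congr e2, tsum_mul_left, J_eq_tsum_stepE]

/-! #### Policies used in the argument -/

/-- The uniform policy. -/
noncomputable def unifP (S A : Type*) [Fintype A] : S → A → ℝ :=
  fun _ _ => (Fintype.card A : ℝ)⁻¹

lemma isPolicy_unifP [Nonempty A] : IsPolicy (unifP S A) := by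
  intro s
  constructor
  · intro a
    unfold unifP
    positivity
  · unfold unifP
    rw [Finset.sum_const, Finset.card_univ, nsmul_eq_mul]
    rw [mul_inv_cancel₀]
    exact Nat.cast_ne_zero.2 Fintype.card_ne_zero

lemma unifP_pos [Nonempty A] (s : S) (a : A) : 0 < unifP S A s a := by
  unfold unifP
  have : (0:ℝ) < Fintype.card A := by
    exact_mod_cast Fintype.card_pos
  positivity

/-- Perturbation of the uniform policy at state `s0` towards action `a0`. -/
noncomputable def pertP [DecidableEq S] [DecidableEq A] (s0 : S) (a0 : A) : S → A → ℝ :=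
  fun s a => if s = s0 then (unifP S A s a + (if a = a0 then 1 else 0)) / 2 else unifP S A s a

lemma isPolicy_pertP [Nonempty A] [DecidableEq S] [DecidableEq A] (s0 : S) (a0 : A) :
    IsPolicy (pertP (S := S) s0 a0) := by
  intro s
  constructor
  · intro a
    unfold pertP
    split
    · have := (unifP_pos (S := S) (A := A) s a).le
      split <;> linarith
    · exact (unifP_pos s a).le
  · unfold pertP
    split
    · rw [← Finset.sum_div, Finset.sum_add_distrib, (isPolicy_unifP s).2]
      simp
    · exact (isPolicy_unifP s).2

lemma pertP_pos [Nonempty A] [DecidableEq S] [DecidableEq A] (s0 : S) (a0 : A)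
    (s : S) (a : A) : 0 < pertP (S := S) s0 a0 s a := by
  unfold pertP
  have := unifP_pos (S := S) (A := A) s a
  split
  · split <;> linarith
  · exact this

/-- Reachability transfers to any fully supported policy. -/
lemma reach_pos (hτ : ∀ s a, IsDist (τ s a)) (hμ0 : IsDist μ0)
    {ρ : S → A → ℝ} (hρ : IsPolicy ρ) (hπ : IsPolicy π)
    (hfull : ∀ s a, 0 < π s a) :
    ∀ t s, 0 < stateDist τ μ0 ρ t s → 0 < stateDist τ μ0 π t s := by
  intro t
  induction t with
  | zero => exact fun s h => h
  | succ t ih =>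
    intro s' h
    have hex : ∃ s ∈ (Finset.univ : Finset S), ∃ a ∈ (Finset.univ : Finset A),
        0 < stateDist τ μ0 ρ t s * ρ s a * τ s a s' := by
      by_contra hc
      push_neg at hc
      have : ∑ s, ∑ a, stateDist τ μ0 ρ t s * ρ s a * τ s a s' ≤ 0 := by
        refine Finset.sum_nonpos fun s hs => Finset.sum_nonpos fun a ha => hc s hs a ha
      exact absurd h this.not_gt
    obtain ⟨s, -, a, -, hpos⟩ := hex
    have hD : 0 < stateDist τ μ0 ρ t s := by
      rcases lt_or_eq_of_le (stateDist_nonneg hτ hμ0.1 hρ t s) with h' | h'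
      · exact h'
      · exfalso; rw [← h'] at hpos; simp at hpos
    have hτpos : 0 < τ s a s' := by
      rcases lt_or_eq_of_le ((hτ s a).1 s') with h' | h'
      · exact h'
      · exfalso; rw [← h'] at hpos; simp at hpos
    have hterm : 0 < stateDist τ μ0 π t s * π s a * τ s a s' :=
      mul_pos (mul_pos (ih s hD) (hfull s a)) hτpos
    show 0 < ∑ s, ∑ a, stateDist τ μ0 π t s * π s a * τ s a s'
    refine Finset.sum_pos' (fun σ _ => Finset.sum_nonneg fun b _ =>
      mul_nonneg (mul_nonneg (stateDist_nonneg hτ hμ0.1 hπ t σ) ((hπ σ).1 b))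
        ((hτ σ b).1 s')) ⟨s, Finset.mem_univ s, ?_⟩
    refine Finset.sum_pos' (fun b _ =>
      mul_nonneg (mul_nonneg (stateDist_nonneg hτ hμ0.1 hπ t s) ((hπ s).1 b))
        ((hτ s b).1 s')) ⟨a, Finset.mem_univ a, hterm⟩

/-! #### Bellman equation and the key triviality lemma -/

/-- Value function of the uniform policy. -/
noncomputable def Vpi [DecidableEq S] (τ : S → A → S → ℝ) (γ : ℝ) (C : Reward S A) :
    S → ℝ := fun s => J τ (dirac s) γ C (unifP S A)

lemma Vpi_bellman [DecidableEq S] [Nonempty A] (hτ : ∀ s a, IsDist (τ s a))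
    {γ : ℝ} (hγ : γ ∈ Set.Ioo (0:ℝ) 1) (C : Reward S A) (s : S) :
    Vpi τ γ C s = ∑ a, unifP S A s a * ∑ s', τ s a s' * (C s a s' + γ * Vpi τ γ C s') := by
  have hπu : IsPolicy (unifP S A) := isPolicy_unifP
  have h1 := J_step (μ0 := dirac s) hτ (isDist_dirac s) hπu hγ C
  have h2 : J τ (stateDist τ (dirac s) (unifP S A) 1) γ C (unifP S A)
      = ∑ s0, stateDist τ (dirac s) (unifP S A) 1 s0 * Vpi τ γ C s0 :=
    J_mu_linear hτ hπu hγ C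
  have h3 : stepE τ (dirac s) (unifP S A) C 0
      = ∑ a, ∑ s', unifP S A s a * τ s a s' * C s a s' := by
    show ∑ σ, ∑ a, ∑ s', dirac s σ * unifP S A σ a * τ σ a s' * C σ a s' = _
    have e : ∀ σ, ∑ a, ∑ s', dirac s σ * unifP S A σ a * τ σ a s' * C σ a s'
        = dirac s σ * ∑ a, ∑ s', unifP S A σ a * τ σ a s' * C σ a s' := by
      intro σ
      rw [Finset.mul_sum]
      refine Finset.sum_congr rfl fun a _ => ?_
      rw [Finset.mul_sum]
      exact Finset.sum_congr rfl fun s' _ => by ring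
    rw [Finset.sum_congr rfl fun σ _ => e σ]
    simp [dirac]
  have h4 : ∀ s0, stateDist τ (dirac s) (unifP S A) 1 s0
      = ∑ a, unifP S A s a * τ s a s0 := by
    intro s0
    show ∑ σ, ∑ a, dirac s σ * unifP S A σ a * τ σ a s0 = _
    have e : ∀ σ, ∑ a, dirac s σ * unifP S A σ a * τ σ a s0
        = dirac s σ * ∑ a, unifP S A σ a * τ σ a s0 := by
      intro σ
      rw [Finset.mul_sum]
      exact Finset.sum_congr rfl fun a _ => by ring
    rw [Finset.sum_congr rfl fun σ _ => e σ]
    simp [dirac]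
  have hmain : Vpi τ γ C s = (∑ a, ∑ s', unifP S A s a * τ s a s' * C s a s')
      + γ * ∑ s0, (∑ a, unifP S A s a * τ s a s0) * Vpi τ γ C s0 := by
    show J τ (dirac s) γ C (unifP S A) = _
    rw [h1, h2, h3]
    congr 1
    congr 1
    exact Finset.sum_congr rfl fun s0 _ => by rw [h4 s0]
  rw [hmain]
  have hrhs : ∀ a, unifP S A s a * ∑ s', τ s a s' * (C s a s' + γ * Vpi τ γ C s')
      = (∑ s', unifP S A s a * τ s a s' * C s a s')
        + ∑ s', γ * (unifP S A s a * τ s a s' * Vpi τ γ C s') := by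
    intro a
    rw [Finset.mul_sum, ← Finset.sum_add_distrib]
    exact Finset.sum_congr rfl fun s' _ => by ring
  rw [Finset.sum_congr rfl fun a _ => hrhs a, Finset.sum_add_distrib]
  congr 1
  have e1 : γ * ∑ s0, (∑ a, unifP S A s a * τ s a s0) * Vpi τ γ C s0
      = ∑ s0, ∑ a, γ * (unifP S A s a * τ s a s0 * Vpi τ γ C s0) := by
    rw [Finset.mul_sum]
    refine Finset.sum_congr rfl fun s0 _ => ?_
    rw [Finset.sum_mul, Finset.mul_sum]
    try exact Finset.sum_congr rfl fun a _ => by ring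
  rw [e1, Finset.sum_comm]

lemma J_const_differBy_zero [Nonempty A] [DecidableEq S] [DecidableEq A]
    (hτ : ∀ s a, IsDist (τ s a)) (hμ0 : IsDist μ0)
    {γ : ℝ} (hγ : γ ∈ Set.Ioo (0:ℝ) 1) (hreach : AllReachable τ μ0) (C : Reward S A)
    (hconst : ∀ (π' : S → A → ℝ), IsPolicy π' →
      J τ μ0 γ C π' = J τ μ0 γ C (unifP S A)) :
    DifferBy γ τ C 0 := by
  have hπu : IsPolicy (unifP S A) := isPolicy_unifP
  set Vv : S → ℝ := Vpi τ γ C with hVv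
  set Rh : Reward S A := fun s a s' => C s a s' + γ * Vv s' - Vv s with hRh
  have hBell : ∀ s, Vv s = ∑ a, unifP S A s a * ∑ s', τ s a s' * (C s a s' + γ * Vv s') :=
    fun s => Vpi_bellman hτ hγ C s
  have hq_def : ∀ s a, (∑ s', τ s a s' * Rh s a s')
      = (∑ s', τ s a s' * (C s a s' + γ * Vv s')) - Vv s := by
    intro s a
    have e : ∀ s', τ s a s' * Rh s a s'
        = τ s a s' * (C s a s' + γ * Vv s') - τ s a s' * Vv s := by
      intro s'
      show τ s a s' * (C s a s' + γ * Vv s' - Vv s) = _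
      ring
    rw [Finset.sum_congr rfl fun s' _ => e s', Finset.sum_sub_distrib,
      ← Finset.sum_mul, (hτ s a).2, one_mul]
  have hsum_pi_q : ∀ s, ∑ a, unifP S A s a * (∑ s', τ s a s' * Rh s a s') = 0 := by
    intro s
    have e1 : ∑ a, unifP S A s a * (∑ s', τ s a s' * Rh s a s')
        = (∑ a, unifP S A s a * ∑ s', τ s a s' * (C s a s' + γ * Vv s'))
          - (∑ a, unifP S A s a) * Vv s := by
      rw [Finset.sum_mul, ← Finset.sum_sub_distrib]
      refine Finset.sum_congr rfl fun a _ => ?_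
      rw [hq_def s a]
      ring
    rw [e1, (hπu s).2, one_mul, ← hBell s]
    ring
  have hJRh : ∀ π', IsPolicy π' → J τ μ0 γ Rh π' = 0 := by
    intro π' hπ'
    have h1 : J τ μ0 γ Rh π' = J τ μ0 γ C π' - ∑ s, μ0 s * Vv s :=
      J_shaping hτ hμ0 hπ' hγ Vv (fun s a s' => rfl)
    have h2 : J τ μ0 γ C (unifP S A) = ∑ s, μ0 s * Vv s := J_mu_linear hτ hπu hγ C
    rw [h1, hconst π' hπ', h2]
    ring
  have hqhat : ∀ s0 a0, (∑ s', τ s0 a0 s' * Rh s0 a0 s') = 0 := by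
    intro s0 a0
    set π : S → A → ℝ := pertP s0 a0 with hπdef
    have hπ : IsPolicy π := isPolicy_pertP s0 a0
    have hstep : ∀ t, stepE τ μ0 π Rh t
        = stateDist τ μ0 π t s0 * ((∑ s', τ s0 a0 s' * Rh s0 a0 s') / 2) := by
      intro t
      unfold stepE
      have e1 : ∀ s, ∑ a, ∑ s', stateDist τ μ0 π t s * π s a * τ s a s' * Rh s a s'
          = stateDist τ μ0 π t s * ∑ a, π s a * ∑ s', τ s a s' * Rh s a s' := by
        intro s
        rw [Finset.mul_sum]
        refine Finset.sum_congr rfl fun a _ => ?_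
        rw [Finset.mul_sum, Finset.mul_sum]
        exact Finset.sum_congr rfl fun s' _ => by ring
      rw [Finset.sum_congr rfl fun s _ => e1 s]
      have e2 : ∀ s ∈ (Finset.univ : Finset S), s ≠ s0 →
          stateDist τ μ0 π t s * ∑ a, π s a * ∑ s', τ s a s' * Rh s a s' = 0 := by
        intro s _ hs
        have hpe : ∀ a, π s a = unifP S A s a := by
          intro a
          simp [hπdef, pertP, hs]
        rw [Finset.sum_congr rfl fun a _ => by rw [hpe a], hsum_pi_q s, mul_zero]
      have e3 : ∑ a, π s0 a * ∑ s', τ s0 a s' * Rh s0 a s'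
          = (∑ s', τ s0 a0 s' * Rh s0 a0 s') / 2 := by
        have e4 : ∀ a, π s0 a * (∑ s', τ s0 a s' * Rh s0 a s')
            = (unifP S A s0 a * (∑ s', τ s0 a s' * Rh s0 a s')) / 2
              + (if a = a0 then (∑ s', τ s0 a s' * Rh s0 a s') else 0) / 2 := by
          intro a
          show (if s0 = s0 then (unifP S A s0 a + (if a = a0 then 1 else 0)) / 2
              else unifP S A s0 a) * _ = _
          rw [if_pos rfl]
          split <;> ring
        rw [Finset.sum_congr rfl fun a _ => e4 a, Finset.sum_add_distrib,
          ← Finset.sum_div, ← Finset.sum_div, hsum_pi_q s0]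
        simp
      rw [Finset.sum_eq_single_of_mem s0 (Finset.mem_univ s0) e2, e3]
    obtain ⟨ρ, t0, hρ, hρpos⟩ := hreach s0
    have hπpos : 0 < stateDist τ μ0 π t0 s0 :=
      reach_pos hτ hμ0 hρ hπ (fun s a => pertP_pos s0 a0 s a) t0 s0 hρpos
    have hocc_pos : 0 < ∑' t, γ ^ t * stateDist τ μ0 π t s0 := by
      refine Summable.tsum_pos ?_ ?_ t0 ?_
      · refine summable_geom_aux hγ (M := 1) fun t => ?_
        rw [abs_of_nonneg (stateDist_nonneg hτ hμ0.1 hπ t s0)]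
        exact stateDist_le_one hτ hμ0 hπ t s0
      · intro t
        exact mul_nonneg (pow_nonneg hγ.1.le t) (stateDist_nonneg hτ hμ0.1 hπ t s0)
      · exact mul_pos (pow_pos hγ.1 t0) hπpos
    have hfact : J τ μ0 γ Rh π
        = ((∑ s', τ s0 a0 s' * Rh s0 a0 s') / 2) * ∑' t, γ ^ t * stateDist τ μ0 π t s0 := by
      rw [J_eq_tsum_stepE, ← tsum_mul_left]
      refine tsum_congr fun t => ?_
      rw [hstep t]
      ring
    have h0 := hJRh π hπ
    rw [hfact] at h0
    rcases mul_eq_zero.1 h0 with h | h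
    · linarith
    · exact absurd h hocc_pos.ne'
  refine ⟨Rh, ⟨Vv, fun s a s' => rfl⟩, ?_⟩
  intro s a
  rw [hqhat s a]
  show (0:ℝ) = ∑ s' : S, τ s a s' * (0 : Reward S A) s a s'
  simp

/-! #### The `maxJ - minJ` seminorm -/

lemma ciSup_sub_const {ι : Type*} [Nonempty ι] (f : ι → ℝ)
    (hb : BddAbove (Set.range f)) (K : ℝ) :
    (⨆ i, (f i - K)) = (⨆ i, f i) - K := by
  have hb' : BddAbove (Set.range fun i => f i - K) := by
    obtain ⟨M, hM⟩ := hb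
    exact ⟨M - K, by rintro x ⟨i, rfl⟩; have := hM ⟨i, rfl⟩; simpa using sub_le_sub_right this K⟩
  apply le_antisymm
  · refine ciSup_le fun i => ?_
    have := le_ciSup hb i
    linarith
  · rw [sub_le_iff_le_add]
    refine ciSup_le fun i => ?_
    have := le_ciSup hb' i
    linarith

lemma ciInf_sub_const {ι : Type*} [Nonempty ι] (f : ι → ℝ)
    (hb : BddBelow (Set.range f)) (K : ℝ) :
    (⨅ i, (f i - K)) = (⨅ i, f i) - K := by
  have hb' : BddBelow (Set.range fun i => f i - K) := by
    obtain ⟨M, hM⟩ := hb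
    exact ⟨M - K, by rintro x ⟨i, rfl⟩; have := hM ⟨i, rfl⟩; simpa using sub_le_sub_right this K⟩
  apply le_antisymm
  · rw [le_sub_iff_add_le]
    refine le_ciInf fun i => ?_
    have := ciInf_le hb' i
    linarith
  · refine le_ciInf fun i => ?_
    have := ciInf_le hb i
    linarith

variable [Nonempty A]

lemma nonempty_policy : Nonempty (Policy S A) := ⟨⟨unifP S A, isPolicy_unifP⟩⟩

lemma bddAbove_J (hτ : ∀ s a, IsDist (τ s a)) (hμ0 : IsDist μ0)
    {γ : ℝ} (hγ : γ ∈ Set.Ioo (0:ℝ) 1) (F : Reward S A) :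
    BddAbove (Set.range fun π : Policy S A => J τ μ0 γ F π.1) := by
  refine ⟨(1 - γ)⁻¹ * l1 F, ?_⟩
  rintro x ⟨π, rfl⟩
  exact (abs_le.1 (abs_J_le hτ hμ0 π.2 hγ F)).2

lemma bddBelow_J (hτ : ∀ s a, IsDist (τ s a)) (hμ0 : IsDist μ0)
    {γ : ℝ} (hγ : γ ∈ Set.Ioo (0:ℝ) 1) (F : Reward S A) :
    BddBelow (Set.range fun π : Policy S A => J τ μ0 γ F π.1) := by
  refine ⟨-((1 - γ)⁻¹ * l1 F), ?_⟩
  rintro x ⟨π, rfl⟩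
  exact (abs_le.1 (abs_J_le hτ hμ0 π.2 hγ F)).1

lemma J_le_maxJ (hτ : ∀ s a, IsDist (τ s a)) (hμ0 : IsDist μ0)
    {γ : ℝ} (hγ : γ ∈ Set.Ioo (0:ℝ) 1) (F : Reward S A) (π : Policy S A) :
    J τ μ0 γ F π.1 ≤ maxJ τ μ0 γ F := by
  haveI := nonempty_policy (S := S) (A := A)
  exact le_ciSup (bddAbove_J hτ hμ0 hγ F) π

lemma minJ_le_J (hτ : ∀ s a, IsDist (τ s a)) (hμ0 : IsDist μ0)
    {γ : ℝ} (hγ : γ ∈ Set.Ioo (0:ℝ) 1) (F : Reward S A) (π : Policy S A) :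
    minJ τ μ0 γ F ≤ J τ μ0 γ F π.1 := by
  haveI := nonempty_policy (S := S) (A := A)
  exact ciInf_le (bddBelow_J hτ hμ0 hγ F) π

/-- The `maxJ - minJ` seminorm. -/
noncomputable def Dn (τ : S → A → S → ℝ) (μ0 : S → ℝ) (γ : ℝ) (F : Reward S A) : ℝ :=
  maxJ τ μ0 γ F - minJ τ μ0 γ F

lemma Dn_nonneg (hτ : ∀ s a, IsDist (τ s a)) (hμ0 : IsDist μ0)
    {γ : ℝ} (hγ : γ ∈ Set.Ioo (0:ℝ) 1) (F : Reward S A) : 0 ≤ Dn τ μ0 γ F := by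
  have π : Policy S A := ⟨unifP S A, isPolicy_unifP⟩
  have h1 := J_le_maxJ hτ hμ0 hγ F π
  have h2 := minJ_le_J hτ hμ0 hγ F π
  unfold Dn
  linarith

lemma Dn_shift (hτ : ∀ s a, IsDist (τ s a)) (hμ0 : IsDist μ0)
    {γ : ℝ} (hγ : γ ∈ Set.Ioo (0:ℝ) 1) {F G : Reward S A} {K : ℝ}
    (h : ∀ π : Policy S A, J τ μ0 γ F π.1 = J τ μ0 γ G π.1 - K) :
    Dn τ μ0 γ F = Dn τ μ0 γ G := by
  haveI := nonempty_policy (S := S) (A := A)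
  have hmax : maxJ τ μ0 γ F = maxJ τ μ0 γ G - K := by
    show (⨆ π : Policy S A, J τ μ0 γ F π.1) = (⨆ π : Policy S A, J τ μ0 γ G π.1) - K
    rw [← ciSup_sub_const _ (bddAbove_J hτ hμ0 hγ G) K]
    exact congrArg iSup (funext fun π => h π)
  have hmin : minJ τ μ0 γ F = minJ τ μ0 γ G - K := by
    show (⨅ π : Policy S A, J τ μ0 γ F π.1) = (⨅ π : Policy S A, J τ μ0 γ G π.1) - K
    rw [← ciInf_sub_const _ (bddBelow_J hτ hμ0 hγ G) K]
    exact congrArg iInf (funext fun π => h π)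
  unfold Dn
  rw [hmax, hmin]
  ring

lemma Dn_triangle (hτ : ∀ s a, IsDist (τ s a)) (hμ0 : IsDist μ0)
    {γ : ℝ} (hγ : γ ∈ Set.Ioo (0:ℝ) 1) (F G : Reward S A) :
    Dn τ μ0 γ (F + G) ≤ Dn τ μ0 γ F + Dn τ μ0 γ G := by
  haveI := nonempty_policy (S := S) (A := A)
  have hmax : maxJ τ μ0 γ (F + G) ≤ maxJ τ μ0 γ F + maxJ τ μ0 γ G := by
    refine ciSup_le fun π => ?_
    rw [J_add hτ hμ0 π.2 hγ]
    exact add_le_add (J_le_maxJ hτ hμ0 hγ F π) (J_le_maxJ hτ hμ0 hγ G π)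
  have hmin : minJ τ μ0 γ F + minJ τ μ0 γ G ≤ minJ τ μ0 γ (F + G) := by
    refine le_ciInf fun π => ?_
    rw [J_add hτ hμ0 π.2 hγ]
    exact add_le_add (minJ_le_J hτ hμ0 hγ F π) (minJ_le_J hτ hμ0 hγ G π)
  unfold Dn
  linarith

lemma Dn_smul {γ : ℝ} (r : ℝ) (F : Reward S A) :
    Dn τ μ0 γ (r • F) = |r| * Dn τ μ0 γ F := by
  haveI := nonempty_policy (S := S) (A := A)
  have emax : maxJ τ μ0 γ (r • F) = ⨆ π : Policy S A, r * J τ μ0 γ F π.1 := by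
    show (⨆ π : Policy S A, J τ μ0 γ (r • F) π.1) = _
    exact congrArg iSup (funext fun π => J_smul r F)
  have emin : minJ τ μ0 γ (r • F) = ⨅ π : Policy S A, r * J τ μ0 γ F π.1 := by
    show (⨅ π : Policy S A, J τ μ0 γ (r • F) π.1) = _
    exact congrArg iInf (funext fun π => J_smul r F)
  rcases le_or_gt 0 r with hr | hr
  · unfold Dn
    rw [emax, emin, ← Real.mul_iSup_of_nonneg hr, ← Real.mul_iInf_of_nonneg hr,
      abs_of_nonneg hr]
    show r * (⨆ π : Policy S A, J τ μ0 γ F π.1)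
        - r * (⨅ π : Policy S A, J τ μ0 γ F π.1) = _
    unfold maxJ minJ
    ring
  · unfold Dn
    rw [emax, emin, ← Real.mul_iInf_of_nonpos hr.le, ← Real.mul_iSup_of_nonpos hr.le,
      abs_of_neg hr]
    show r * (⨅ π : Policy S A, J τ μ0 γ F π.1)
        - r * (⨆ π : Policy S A, J τ μ0 γ F π.1) = _
    unfold maxJ minJ
    ring

lemma Dn_eq_zero_const (hτ : ∀ s a, IsDist (τ s a)) (hμ0 : IsDist μ0)
    {γ : ℝ} (hγ : γ ∈ Set.Ioo (0:ℝ) 1) {F : Reward S A} (h : Dn τ μ0 γ F = 0) :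
    ∀ (π' : S → A → ℝ), IsPolicy π' → J τ μ0 γ F π' = J τ μ0 γ F (unifP S A) := by
  intro π' hπ'
  have hu : Policy S A := ⟨unifP S A, isPolicy_unifP⟩
  have h1 := J_le_maxJ hτ hμ0 hγ F ⟨π', hπ'⟩
  have h2 := minJ_le_J hτ hμ0 hγ F ⟨π', hπ'⟩
  have h3 := J_le_maxJ hτ hμ0 hγ F ⟨unifP S A, isPolicy_unifP⟩
  have h4 := minJ_le_J hτ hμ0 hγ F ⟨unifP S A, isPolicy_unifP⟩
  unfold Dn at h
  show J τ μ0 γ F π' = J τ μ0 γ F (unifP S A)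
  linarith

/-! #### Norm comparison in finite dimensions -/

lemma q_sum_le {V : Type*} [AddCommGroup V] [Module ℝ V] (q : V → ℝ)
    (hqh : ∀ (r : ℝ) (x : V), q (r • x) = |r| * q x)
    (hqt : ∀ x y, q (x + y) ≤ q x + q y)
    {ι : Type*} (t : Finset ι) (f : ι → V) :
    q (∑ i ∈ t, f i) ≤ ∑ i ∈ t, q (f i) := by
  classical
  have hq0 : q 0 = 0 := by
    have := hqh 0 0
    simpa using this
  induction t using Finset.induction_on with
  | empty => simp [hq0]
  | insert _ _ hnot ih =>
    rename_i a t'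
    rw [Finset.sum_insert hnot, Finset.sum_insert hnot]
    exact (hqt _ _).trans (add_le_add_right ih _)

lemma exists_norm_bound {V : Type*} [AddCommGroup V] [Module ℝ V] [FiniteDimensional ℝ V]
    (p q : V → ℝ)
    (hpd : ∀ x, p x = 0 → x = 0)
    (hph : ∀ (r : ℝ) (x : V), p (r • x) = |r| * p x)
    (hpt : ∀ x y, p (x + y) ≤ p x + p y)
    (hq0 : ∀ x, 0 ≤ q x)
    (hqh : ∀ (r : ℝ) (x : V), q (r • x) = |r| * q x)
    (hqt : ∀ x y, q (x + y) ≤ q x + q y) :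
    ∃ K : ℝ, 0 < K ∧ ∀ x, q x ≤ K * p x := by
  classical
  have hp0 : p 0 = 0 := by
    have := hph 0 0
    simpa using this
  letI : NormedAddCommGroup V := AddGroupNorm.toNormedAddCommGroup
    { toFun := p
      map_zero' := hp0
      add_le' := hpt
      neg' := fun x => by
        have := hph (-1) x
        simpa using this
      eq_zero_of_map_eq_zero' := fun x h => hpd x h }
  letI : NormedSpace ℝ V :=
    { norm_smul_le := fun r x => le_of_eq (hph r x) }
  let b := Module.finBasis ℝ V
  have hcoord : ∀ i, ∃ Ci : ℝ, 0 ≤ Ci ∧ ∀ x : V, |b.repr x i| ≤ Ci * p x := by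
    intro i
    let L : V →ₗ[ℝ] ℝ := b.coord i
    have hLc : Continuous L := L.continuous_of_finiteDimensional
    let Lc : V →L[ℝ] ℝ := ⟨L, hLc⟩
    refine ⟨‖Lc‖, norm_nonneg _, fun x => ?_⟩
    have := Lc.le_opNorm x
    exact this
  choose Cf hC0 hC using hcoord
  refine ⟨(∑ i, Cf i * q (b i)) + 1, ?_, ?_⟩
  · have : 0 ≤ ∑ i, Cf i * q (b i) :=
      Finset.sum_nonneg fun i _ => mul_nonneg (hC0 i) (hq0 _)
    linarith
  · intro x
    have hx : x = ∑ i, b.repr x i • b i := (b.sum_repr x).symm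
    have h1 : q x ≤ ∑ i, q (b.repr x i • b i) := by
      conv_lhs => rw [hx]
      exact q_sum_le q hqh hqt _ _
    have h2 : ∀ i, q (b.repr x i • b i) ≤ (Cf i * q (b i)) * p x := by
      intro i
      rw [hqh]
      calc |b.repr x i| * q (b i) ≤ (Cf i * p x) * q (b i) :=
            mul_le_mul_of_nonneg_right (hC i x) (hq0 _)
        _ = (Cf i * q (b i)) * p x := by ring
    have h3 : q x ≤ (∑ i, Cf i * q (b i)) * p x := by
      refine h1.trans ?_
      rw [Finset.sum_mul]
      exact Finset.sum_le_sum fun i _ => h2 i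
    have hpx : 0 ≤ p x := by
      have h4 := hpt x (-x)
      have h5 : p (-x) = p x := by
        have := hph (-1) x
        simpa using this
      rw [add_neg_cancel, hp0] at h4
      linarith
    nlinarith

/-! #### Final assembly helpers -/

lemma l1_smul (r : ℝ) (F : Reward S A) : l1 (r • F) = |r| * l1 F := by
  unfold l1
  rw [Finset.mul_sum]
  refine Finset.sum_congr rfl fun s _ => ?_
  rw [Finset.mul_sum]
  refine Finset.sum_congr rfl fun a _ => ?_
  rw [Finset.mul_sum]
  refine Finset.sum_congr rfl fun s' _ => ?_
  show |r * F s a s'| = _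
  rw [abs_mul]

lemma l1_add_le (F G : Reward S A) : l1 (F + G) ≤ l1 F + l1 G := by
  unfold l1
  rw [← Finset.sum_add_distrib]
  refine Finset.sum_le_sum fun s _ => ?_
  rw [← Finset.sum_add_distrib]
  refine Finset.sum_le_sum fun a _ => ?_
  rw [← Finset.sum_add_distrib]
  refine Finset.sum_le_sum fun s' _ => ?_
  exact abs_add_le _ _

lemma J_zero {γ : ℝ} : J τ μ0 γ (0 : Reward S A) π = 0 := by
  have h : (0 : Reward S A) = (0 : ℝ) • (0 : Reward S A) := by simp
  rw [h, J_smul, zero_mul]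

lemma J_canon_shift (hτ : ∀ s a, IsDist (τ s a)) (hμ0 : IsDist μ0)
    {γ : ℝ} (hγ : γ ∈ Set.Ioo (0:ℝ) 1) {R C : Reward S A} (h : DifferBy γ τ R C) :
    ∃ K : ℝ, ∀ (π' : S → A → ℝ), IsPolicy π' →
      J τ μ0 γ C π' = J τ μ0 γ R π' - K := by
  obtain ⟨R', ⟨Φ, hΦ⟩, hsr⟩ := h
  refine ⟨∑ s, μ0 s * Φ s, fun π' hπ' => ?_⟩
  rw [← J_sredist (π := π') hτ hsr]
  exact J_shaping hτ hμ0 hπ' hγ Φ hΦ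

end Aux

/-- every STARC metric is sound. -/
theorem starc_is_sound
    {S A : Type*} [Fintype S] [Fintype A] [Nonempty S] [Nonempty A]
    (τ : S → A → S → ℝ) (hτ : ∀ s a, IsDist (τ s a))
    (μ0 : S → ℝ) (hμ0 : IsDist μ0)
    (γ : ℝ) (hγ : γ ∈ Set.Ioo (0 : ℝ) 1)
    (hreach : AllReachable τ μ0)
    (d : Reward S A → Reward S A → ℝ) (hd : IsSTARC γ τ d) :
    Sound τ μ0 γ d := by
  classical
  obtain ⟨c, n, m, sfun, ⟨hclin, hcdiff, hciff⟩, hn, hs, ⟨hmet, p, l, u, hp, hl, hu, hlu⟩,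
    hdm⟩ := hd
  have hp_def : ∀ x, p x = 0 → x = 0 := fun x h => (hp.2.1 x (Set.mem_univ x)).1 h
  have hp_smul : ∀ (r : ℝ) (x : Reward S A), p (r • x) = |r| * p x :=
    fun r x => hp.2.2.1 x (Set.mem_univ x) r
  have hp_tri : ∀ x y : Reward S A, p (x + y) ≤ p x + p y :=
    fun x y => hp.2.2.2 x (Set.mem_univ x) y (Set.mem_univ y)
  obtain ⟨K1, hK1pos, hK1⟩ := exists_norm_bound p l1 hp_def hp_smul hp_tri
    (fun F => l1_nonneg F) (fun r F => l1_smul r F) (fun F G => l1_add_le F G)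
  set Bc := (1 - γ)⁻¹ * K1 with hBcdef
  have h1γ : (0:ℝ) < 1 - γ := by linarith [hγ.2]
  have hBcpos : 0 < Bc := by rw [hBcdef]; positivity
  have hB : ∀ (F : Reward S A) (π' : S → A → ℝ), IsPolicy π' →
      |J τ μ0 γ F π'| ≤ Bc * p F := by
    intro F π' hπ'
    have h1 := abs_J_le hτ hμ0 hπ' hγ F
    have h2 : (1 - γ)⁻¹ * l1 F ≤ (1 - γ)⁻¹ * (K1 * p F) :=
      mul_le_mul_of_nonneg_left (hK1 F) (by positivity)
    calc |J τ μ0 γ F π'| ≤ (1 - γ)⁻¹ * l1 F := h1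
      _ ≤ (1 - γ)⁻¹ * (K1 * p F) := h2
      _ = Bc * p F := by rw [hBcdef]; ring
  -- the canonicalised rewards form a submodule
  set cl : Reward S A →ₗ[ℝ] Reward S A := IsLinearMap.mk' c hclin with hcl
  set M := LinearMap.range cl with hM
  have hmemrange : ∀ x : M, (x : Reward S A) ∈ Set.range c := by
    rintro ⟨x, hx⟩
    obtain ⟨y, hy⟩ := hx
    exact ⟨y, hy⟩
  have hceq : ∀ x : M, c (x : Reward S A) = (x : Reward S A) := by
    rintro ⟨x, hx⟩
    obtain ⟨y, hy⟩ := hx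
    have h2 : c y = c (c y) := (hciff y (c y)).2 (hcdiff y)
    show c x = x
    rw [← hy]
    exact h2.symm
  have hc0 : c 0 = 0 := hclin.map_zero
  obtain ⟨K2, hK2pos, hK2⟩ := exists_norm_bound (V := M)
    (fun x => Dn τ μ0 γ (x : Reward S A)) (fun x => n (x : Reward S A))
    (fun x hx => by
      have hconst := Dn_eq_zero_const hτ hμ0 hγ hx
      have hdb : DifferBy γ τ (x : Reward S A) 0 :=
        J_const_differBy_zero hτ hμ0 hγ hreach _ hconst
      have h1 : c (x : Reward S A) = c 0 := (hciff _ 0).2 hdb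
      have h2 : (x : Reward S A) = 0 := by rw [← hceq x, h1, hc0]
      exact Subtype.ext h2)
    (fun r x => by
      show Dn τ μ0 γ ((r • x : M) : Reward S A) = |r| * Dn τ μ0 γ ((x : M) : Reward S A)
      rw [Submodule.coe_smul]
      exact Dn_smul r _)
    (fun x y => by
      show Dn τ μ0 γ ((x + y : M) : Reward S A)
        ≤ Dn τ μ0 γ ((x : M) : Reward S A) + Dn τ μ0 γ ((y : M) : Reward S A)
      rw [Submodule.coe_add]
      exact Dn_triangle hτ hμ0 hγ _ _)
    (fun x => hn.1 _ (hmemrange x))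
    (fun r x => by
      show n ((r • x : M) : Reward S A) = |r| * n ((x : M) : Reward S A)
      rw [Submodule.coe_smul]
      exact hn.2.2.1 _ (hmemrange x) r)
    (fun x y => by
      show n ((x + y : M) : Reward S A) ≤ n ((x : M) : Reward S A) + n ((y : M) : Reward S A)
      rw [Submodule.coe_add]
      exact hn.2.2.2 _ (hmemrange x) _ (hmemrange y))
  have hUpos : 0 < 2 * Bc * K2 / l :=
    div_pos (mul_pos (mul_pos two_pos hBcpos) hK2pos) hl
  refine ⟨2 * Bc * K2 / l, hUpos, ?_⟩
  intro R1 R2 π1 π2 hle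
  have hd12 : d R1 R2 = m (sfun R1) (sfun R2) := hdm R1 R2
  have hmem1 : sfun R1 ∈ Set.range sfun := ⟨R1, rfl⟩
  have hmem2 : sfun R2 ∈ Set.range sfun := ⟨R2, rfl⟩
  have hd_nonneg : 0 ≤ d R1 R2 := by rw [hd12]; exact hmet.2.1 _ hmem1 _ hmem2
  have hpdist : l * p (sfun R1 - sfun R2) ≤ d R1 R2 := by
    rw [hd12]
    exact (hlu _ hmem1 _ hmem2).1
  obtain ⟨K1c, hK1c⟩ := J_canon_shift hτ hμ0 hγ (hcdiff R1)
  obtain ⟨K2c, hK2c⟩ := J_canon_shift hτ hμ0 hγ (hcdiff R2)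
  have hDnR1 : Dn τ μ0 γ (c R1) = Dn τ μ0 γ R1 :=
    Dn_shift hτ hμ0 hγ (fun π => hK1c π.1 π.2)
  have hC1mem : c R1 ∈ M := ⟨R1, rfl⟩
  have hn1K : n (c R1) ≤ K2 * Dn τ μ0 γ R1 := by
    have h' : n (c R1) ≤ K2 * Dn τ μ0 γ (c R1) := hK2 ⟨c R1, hC1mem⟩
    rw [hDnR1] at h'
    exact h'
  have hgoalRHS : maxJ τ μ0 γ R1 - minJ τ μ0 γ R1 = Dn τ μ0 γ R1 := rfl
  rw [hgoalRHS]
  by_cases hn1 : n (c R1) = 0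
  · have hC1 : c R1 = 0 := (hn.2.1 _ ⟨R1, rfl⟩).1 hn1
    have e1 := hK1c π1.1 π1.2
    have e2 := hK1c π2.1 π2.2
    rw [hC1, J_zero] at e1 e2
    have hJd : J τ μ0 γ R1 π1.1 - J τ μ0 γ R1 π2.1 = 0 := by linarith
    rw [hJd]
    exact mul_nonneg (mul_nonneg hUpos.le (Dn_nonneg hτ hμ0 hγ R1)) hd_nonneg
  · have hn1pos : 0 < n (c R1) := lt_of_le_of_ne (hn.1 _ ⟨R1, rfl⟩) (Ne.symm hn1)
    have hx1 : sfun R1 = (n (c R1))⁻¹ • c R1 := (hs R1).2 hn1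
    have hx2le : J τ μ0 γ (sfun R2) π1.1 ≤ J τ μ0 γ (sfun R2) π2.1 := by
      have e1 := hK2c π1.1 π1.2
      have e2 := hK2c π2.1 π2.2
      have hC2d : J τ μ0 γ (c R2) π1.1 ≤ J τ μ0 γ (c R2) π2.1 := by linarith
      by_cases hn2 : n (c R2) = 0
      · rw [(hs R2).1 hn2]
        exact hC2d
      · rw [(hs R2).2 hn2, J_smul, J_smul]
        have hn2pos : 0 < n (c R2) := lt_of_le_of_ne (hn.1 _ ⟨R2, rfl⟩) (Ne.symm hn2)
        exact mul_le_mul_of_nonneg_left hC2d (by positivity)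
    have hkey : J τ μ0 γ (sfun R1) π1.1 - J τ μ0 γ (sfun R1) π2.1
        ≤ 2 * Bc * (d R1 R2 / l) := by
      have e1 := J_sub hτ hμ0 π1.2 hγ (sfun R1) (sfun R2)
      have e2 := J_sub hτ hμ0 π2.2 hγ (sfun R1) (sfun R2)
      have b1 := hB (sfun R1 - sfun R2) π1.1 π1.2
      have b2 := hB (sfun R1 - sfun R2) π2.1 π2.2
      have hpd2 : p (sfun R1 - sfun R2) ≤ d R1 R2 / l := by
        rw [le_div_iff₀ hl]
        linarith
      have habs : Bc * p (sfun R1 - sfun R2) ≤ Bc * (d R1 R2 / l) :=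
        mul_le_mul_of_nonneg_left hpd2 hBcpos.le
      have h1 := abs_le.1 b1
      have h2 := abs_le.1 b2
      linarith
    have hsc : J τ μ0 γ R1 π1.1 - J τ μ0 γ R1 π2.1
        = n (c R1) * (J τ μ0 γ (sfun R1) π1.1 - J τ μ0 γ (sfun R1) π2.1) := by
      have e1 := hK1c π1.1 π1.2
      have e2 := hK1c π2.1 π2.2
      calc J τ μ0 γ R1 π1.1 - J τ μ0 γ R1 π2.1
          = J τ μ0 γ (c R1) π1.1 - J τ μ0 γ (c R1) π2.1 := by linarith
        _ = (n (c R1) * (n (c R1))⁻¹) * J τ μ0 γ (c R1) π1.1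
            - (n (c R1) * (n (c R1))⁻¹) * J τ μ0 γ (c R1) π2.1 := by
            rw [mul_inv_cancel₀ hn1, one_mul, one_mul]
        _ = n (c R1) * ((n (c R1))⁻¹ * J τ μ0 γ (c R1) π1.1
            - (n (c R1))⁻¹ * J τ μ0 γ (c R1) π2.1) := by ring
        _ = n (c R1) * (J τ μ0 γ (sfun R1) π1.1 - J τ μ0 γ (sfun R1) π2.1) := by
            rw [hx1, J_smul, J_smul]
    rw [hsc]
    have hfac_nonneg : 0 ≤ 2 * Bc * (d R1 R2 / l) := by
      have := hd_nonneg
      positivity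
    calc n (c R1) * (J τ μ0 γ (sfun R1) π1.1 - J τ μ0 γ (sfun R1) π2.1)
        ≤ n (c R1) * (2 * Bc * (d R1 R2 / l)) :=
          mul_le_mul_of_nonneg_left hkey hn1pos.le
      _ ≤ (K2 * Dn τ μ0 γ R1) * (2 * Bc * (d R1 R2 / l)) :=
          mul_le_mul_of_nonneg_right hn1K hfac_nonneg
      _ = 2 * Bc * K2 / l * Dn τ μ0 γ R1 * d R1 R2 := by
          field_simp

end RewardPaper
end

section
/- If two pseudometrics d1 and d2 on ℛ are both sound and complete, then d1 and d2 are bilipschitz equivalent: there exist positive constants ℓ and u such that ℓ·d1(R1,R2) ≤ d2(R1,R2) ≤ u·d1(R1,R2) for all reward functions R1, R2. -/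
namespace RewardPaper

section AuxBilip

variable {S A : Type*} [Fintype S] [Fintype A]

private lemma triple_sum_one (τ : S → A → S → ℝ) (hτ : ∀ s a, IsDist (τ s a))
    (p : S → ℝ) (hp : IsDist p) (π : S → A → ℝ) (hπ : IsPolicy π) :
    ∑ s, ∑ a, ∑ s', p s * π s a * τ s a s' = 1 := by
  have h1 : ∀ s a, (∑ s', p s * π s a * τ s a s') = p s * π s a := by
    intro s a; rw [← Finset.mul_sum, (hτ s a).2, mul_one]
  simp_rw [h1]
  have h2 : ∀ s, (∑ a, p s * π s a) = p s := by
    intro s; rw [← Finset.mul_sum, (hπ s).2, mul_one]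
  simp_rw [h2, hp.2]

private lemma stateDist_isDist (τ : S → A → S → ℝ) (hτ : ∀ s a, IsDist (τ s a))
    (μ0 : S → ℝ) (hμ0 : IsDist μ0) (π : S → A → ℝ) (hπ : IsPolicy π) (t : ℕ) :
    IsDist (stateDist τ μ0 π t) := by
  induction t with
  | zero => exact hμ0
  | succ t ih =>
    refine ⟨fun s' => ?_, ?_⟩
    · exact Finset.sum_nonneg fun s _ => Finset.sum_nonneg fun a _ =>
        mul_nonneg (mul_nonneg (ih.1 s) ((hπ s).1 a)) ((hτ s a).1 s')
    · show (∑ s', ∑ s, ∑ a, stateDist τ μ0 π t s * π s a * τ s a s') = 1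
      calc (∑ s', ∑ s, ∑ a, stateDist τ μ0 π t s * π s a * τ s a s')
          = ∑ s, ∑ a, ∑ s', stateDist τ μ0 π t s * π s a * τ s a s' := by
            rw [Finset.sum_comm]
            exact Finset.sum_congr rfl fun s _ => Finset.sum_comm
        _ = 1 := triple_sum_one τ hτ _ ih π hπ

private lemma inner_bound (τ : S → A → S → ℝ) (hτ : ∀ s a, IsDist (τ s a))
    (p : S → ℝ) (hp : IsDist p) (π : S → A → ℝ) (hπ : IsPolicy π) (R : Reward S A)
    (M : ℝ) (hM : ∀ s a s', |R s a s'| ≤ M) :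
    |∑ s, ∑ a, ∑ s', p s * π s a * τ s a s' * R s a s'| ≤ M := by
  have key := triple_sum_one τ hτ p hp π hπ
  have hw : ∀ s a s', 0 ≤ p s * π s a * τ s a s' := fun s a s' =>
    mul_nonneg (mul_nonneg (hp.1 s) ((hπ s).1 a)) ((hτ s a).1 s')
  have eqM : ∀ c : ℝ, (∑ s, ∑ a, ∑ s', p s * π s a * τ s a s' * c) = c := by
    intro c
    simp_rw [← Finset.sum_mul]
    rw [key, one_mul]
  rw [abs_le]
  constructor
  · rw [show -M = ∑ s, ∑ a, ∑ s', p s * π s a * τ s a s' * (-M) from (eqM (-M)).symm]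
    refine Finset.sum_le_sum fun s _ => Finset.sum_le_sum fun a _ =>
      Finset.sum_le_sum fun s' _ => ?_
    exact mul_le_mul_of_nonneg_left (neg_le_of_abs_le (hM s a s')) (hw s a s')
  · rw [show M = ∑ s, ∑ a, ∑ s', p s * π s a * τ s a s' * M from (eqM M).symm]
    refine Finset.sum_le_sum fun s _ => Finset.sum_le_sum fun a _ =>
      Finset.sum_le_sum fun s' _ => ?_
    exact mul_le_mul_of_nonneg_left (le_of_abs_le (hM s a s')) (hw s a s')

private lemma J_abs_bound (τ : S → A → S → ℝ) (hτ : ∀ s a, IsDist (τ s a))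
    (μ0 : S → ℝ) (hμ0 : IsDist μ0) {γ : ℝ} (hγ : γ ∈ Set.Ioo (0 : ℝ) 1)
    (R : Reward S A) (M : ℝ) (hM : ∀ s a s', |R s a s'| ≤ M)
    (π : S → A → ℝ) (hπ : IsPolicy π) :
    |J τ μ0 γ R π| ≤ ∑' t : ℕ, M * γ ^ t := by
  set f : ℕ → ℝ := fun t =>
    γ ^ t * ∑ s, ∑ a, ∑ s', stateDist τ μ0 π t s * π s a * τ s a s' * R s a s' with hf
  have hbnd : ∀ t, |f t| ≤ M * γ ^ t := by
    intro t
    have h1 := inner_bound τ hτ _ (stateDist_isDist τ hτ μ0 hμ0 π hπ t) π hπ R M hM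
    have hpow : (0:ℝ) ≤ γ ^ t := pow_nonneg hγ.1.le t
    rw [hf, abs_mul, abs_of_nonneg hpow, mul_comm M (γ ^ t)]
    exact mul_le_mul_of_nonneg_left h1 hpow
  have hg : Summable (fun t : ℕ => M * γ ^ t) :=
    (summable_geometric_of_lt_one hγ.1.le hγ.2).mul_left M
  have hfs : Summable f := by
    refine Summable.of_norm_bounded hg ?_
    intro t; rw [Real.norm_eq_abs]; exact hbnd t
  have hfa : Summable (fun t => |f t|) := hfs.abs
  calc |J τ μ0 γ R π| = |∑' t, f t| := rfl
    _ ≤ ∑' t, |f t| := by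
        have := norm_tsum_le_tsum_norm (f := f) (by simpa [Real.norm_eq_abs] using hfa)
        simpa [Real.norm_eq_abs] using this
    _ ≤ ∑' t, M * γ ^ t := Summable.tsum_le_tsum hbnd hfa hg

end AuxBilip

/-- any two sound and complete pseudometrics on reward space are
bilipschitz equivalent. -/
theorem sound_complete_bilipschitz
    {S A : Type*} [Fintype S] [Fintype A] [Nonempty S] [Nonempty A]
    (τ : S → A → S → ℝ) (hτ : ∀ s a, IsDist (τ s a))
    (μ0 : S → ℝ) (hμ0 : IsDist μ0)
    (γ : ℝ) (hγ : γ ∈ Set.Ioo (0 : ℝ) 1)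
    (hreach : AllReachable τ μ0)
    (d1 d2 : Reward S A → Reward S A → ℝ)
    (h1 : IsPseudometric d1) (h2 : IsPseudometric d2)
    (h1s : Sound τ μ0 γ d1) (h1c : Complete τ μ0 γ d1)
    (h2s : Sound τ μ0 γ d2) (h2c : Complete τ μ0 γ d2) :
    ∃ l u : ℝ, 0 < l ∧ 0 < u ∧
      ∀ R1 R2 : Reward S A,
        l * d1 R1 R2 ≤ d2 R1 R2 ∧ d2 R1 R2 ≤ u * d1 R1 R2 := by
  obtain ⟨U1, hU1, hU1s⟩ := h1s
  obtain ⟨⟨L1, hL1, hL1c⟩, h1same⟩ := h1c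
  obtain ⟨U2, hU2, hU2s⟩ := h2s
  obtain ⟨⟨L2, hL2, hL2c⟩, h2same⟩ := h2c
  have hne : Nonempty (Policy S A) := by
    refine ⟨⟨fun _ _ => (Fintype.card A : ℝ)⁻¹, fun s => ⟨fun a => by positivity, ?_⟩⟩⟩
    rw [Finset.sum_const, Finset.card_univ, nsmul_eq_mul, mul_inv_cancel₀]
    exact_mod_cast Fintype.card_ne_zero
  have hminmax : ∀ (R : Reward S A) (π : Policy S A),
      minJ τ μ0 γ R ≤ J τ μ0 γ R π.1 ∧ J τ μ0 γ R π.1 ≤ maxJ τ μ0 γ R := by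
    intro R π
    set M : ℝ := ∑ s, ∑ a, ∑ s', |R s a s'| with hMdef
    have hM : ∀ s a s', |R s a s'| ≤ M := by
      intro s a s'
      calc |R s a s'| ≤ ∑ s', |R s a s'| :=
            Finset.single_le_sum (f := fun x => |R s a x|) (fun i _ => abs_nonneg _)
              (Finset.mem_univ s')
        _ ≤ ∑ a, ∑ s', |R s a s'| :=
            Finset.single_le_sum (f := fun a => ∑ s', |R s a s'|)
              (fun i _ => Finset.sum_nonneg fun _ _ => abs_nonneg _) (Finset.mem_univ a)
        _ ≤ M :=
            Finset.single_le_sum (f := fun s => ∑ a, ∑ s', |R s a s'|)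
              (fun i _ => Finset.sum_nonneg fun _ _ =>
                Finset.sum_nonneg fun _ _ => abs_nonneg _) (Finset.mem_univ s)
    set B : ℝ := ∑' t : ℕ, M * γ ^ t with hBdef
    have hB : ∀ ρ : Policy S A, |J τ μ0 γ R ρ.1| ≤ B := fun ρ =>
      J_abs_bound τ hτ μ0 hμ0 hγ R M hM ρ.1 ρ.2
    constructor
    · exact ciInf_le ⟨-B, by rintro _ ⟨ρ, rfl⟩; linarith [(abs_le.1 (hB ρ)).1]⟩ π
    · exact le_ciSup ⟨B, by rintro _ ⟨ρ, rfl⟩; exact (abs_le.1 (hB ρ)).2⟩ π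
  have hspan_nonneg : ∀ R : Reward S A, 0 ≤ maxJ τ μ0 γ R - minJ τ μ0 γ R := by
    intro R
    obtain ⟨π0⟩ := hne
    have h := hminmax R π0
    linarith [h.1, h.2]
  have hconst : ∀ R : Reward S A, maxJ τ μ0 γ R - minJ τ μ0 γ R = 0 →
      ∀ π π' : Policy S A, J τ μ0 γ R π.1 ≤ J τ μ0 γ R π'.1 := by
    intro R h π π'
    have h1' := hminmax R π
    have h2' := hminmax R π'
    linarith [h1'.2, h2'.1]
  have key : ∀ R1 R2 : Reward S A, 0 < maxJ τ μ0 γ R1 - minJ τ μ0 γ R1 →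
      d2 R1 R2 ≤ (U1 / L2) * d1 R1 R2 ∧ (L1 / U2) * d1 R1 R2 ≤ d2 R1 R2 := by
    intro R1 R2 hsp
    set sp := maxJ τ μ0 γ R1 - minJ τ μ0 γ R1 with hspdef
    obtain ⟨π1, π2, hord, hc2⟩ := hL2c R1 R2
    have hs1 := hU1s R1 R2 π1 π2 hord
    have h12 : L2 * d2 R1 R2 ≤ U1 * d1 R1 R2 := by
      have h' : (L2 * d2 R1 R2) * sp ≤ (U1 * d1 R1 R2) * sp := by
        calc (L2 * d2 R1 R2) * sp = L2 * sp * d2 R1 R2 := by ring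
          _ ≤ J τ μ0 γ R1 π1.1 - J τ μ0 γ R1 π2.1 := hc2
          _ ≤ U1 * sp * d1 R1 R2 := hs1
          _ = (U1 * d1 R1 R2) * sp := by ring
      exact le_of_mul_le_mul_right h' hsp
    obtain ⟨π1', π2', hord', hc1⟩ := hL1c R1 R2
    have hs2 := hU2s R1 R2 π1' π2' hord'
    have h21 : L1 * d1 R1 R2 ≤ U2 * d2 R1 R2 := by
      have h' : (L1 * d1 R1 R2) * sp ≤ (U2 * d2 R1 R2) * sp := by
        calc (L1 * d1 R1 R2) * sp = L1 * sp * d1 R1 R2 := by ring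
          _ ≤ J τ μ0 γ R1 π1'.1 - J τ μ0 γ R1 π2'.1 := hc1
          _ ≤ U2 * sp * d2 R1 R2 := hs2
          _ = (U2 * d2 R1 R2) * sp := by ring
      exact le_of_mul_le_mul_right h' hsp
    constructor
    · rw [div_mul_eq_mul_div, le_div_iff₀ hL2]
      linarith
    · rw [div_mul_eq_mul_div, div_le_iff₀ hU2]
      linarith
  refine ⟨L1 / U2, U1 / L2, div_pos hL1 hU2, div_pos hU1 hL2, ?_⟩
  intro R1 R2
  rcases (hspan_nonneg R1).lt_or_eq with h₁ | h₁
  · obtain ⟨ha, hb⟩ := key R1 R2 h₁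
    exact ⟨hb, ha⟩
  · rcases (hspan_nonneg R2).lt_or_eq with h₂ | h₂
    · obtain ⟨ha, hb⟩ := key R2 R1 h₂
      rw [h1.2.2.1 R1 R2, h2.2.2.1 R1 R2]
      exact ⟨hb, ha⟩
    · have hso : SameOrder τ μ0 γ R1 R2 := by
        intro π π'
        exact ⟨fun _ => hconst R2 h₂.symm π π', fun _ => hconst R1 h₁.symm π π'⟩
      rw [h1same R1 R2 hso, h2same R1 R2 hso]
      simp


end RewardPaper
end

section
/- Assume |S| ≥ 2 and |A| ≥ 2. There exist reward functions R1, R2 such that d(R1,R2) > 0 for every EPIC-like metric d, but R1 and R2 induce the same ordering of policies for every choice of transition function τ and every initial state distribution μ0. -/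
namespace RewardPaper

/-- there are rewards that every EPIC-like metric separates, even though
they induce the same policy ordering for every `τ` and `μ0`. -/
theorem epic_like_not_complete
    {S A : Type*} [Fintype S] [Fintype A]
    (hS : 2 ≤ Fintype.card S) (hA : 2 ≤ Fintype.card A)
    (γ : ℝ) (hγ : γ ∈ Set.Ioo (0 : ℝ) 1) :
    ∃ R1 R2 : Reward S A,
      (∀ d : Reward S A → Reward S A → ℝ, IsEpicLike γ d → 0 < d R1 R2) ∧
      ∀ (τ : S → A → S → ℝ), (∀ s a, IsDist (τ s a)) →
      ∀ (μ0 : S → ℝ), IsDist μ0 →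
        SameOrder τ μ0 γ R1 R2 := by
  classical
  obtain ⟨s₀, s₁, hs01⟩ := Fintype.exists_pair_of_one_lt_card (by omega : 1 < Fintype.card S)
  obtain ⟨a₀, a₁, ha01⟩ := Fintype.exists_pair_of_one_lt_card (by omega : 1 < Fintype.card A)
  set R1 : Reward S A := fun s a _ =>
    if s = s₀ then (if a = a₀ then (1 : ℝ) else 0) else 0 with hR1
  set R2 : Reward S A := fun s a s' =>
    if s = s₀ then (if a = a₀ then (if s' = s₀ then (2 : ℝ) else 1) else 0) else 0 with hR2
  have hγ1 : γ ≠ 1 := ne_of_lt hγ.2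
  -- key impossibility: R2 is not t • R1 plus potential shaping, for any t
  have key : ∀ t : ℝ, ¬ PotentialShaping γ (t • R1) R2 := by
    rintro t ⟨Φ, hΦ⟩
    have hΦ0 : ∀ x : S, Φ x = 0 := by
      intro x
      have h := hΦ x a₁ x
      have h1 : R2 x a₁ x = 0 := by
        simp [hR2, Ne.symm ha01]
      have h2 : R1 x a₁ x = 0 := by
        simp [hR1, Ne.symm ha01]
      have h3 : (t • R1) x a₁ x = 0 := by
        simp only [Pi.smul_apply, h2, smul_eq_mul, mul_zero]
      rw [h1, h3] at h
      have : (γ - 1) * Φ x = 0 := by linarith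
      rcases mul_eq_zero.mp this with h' | h'
      · exact absurd (by linarith : γ = 1) hγ1
      · exact h'
    have hA0 : R1 s₀ a₀ s₀ = 1 := by simp [hR1]
    have e1 := hΦ s₀ a₀ s₀
    have e2 := hΦ s₀ a₀ s₁
    have v1 : R2 s₀ a₀ s₀ = 2 := by simp [hR2]
    have v2 : R2 s₀ a₀ s₁ = 1 := by
      simp [hR2, Ne.symm hs01]
    have w1 : (t • R1) s₀ a₀ s₀ = t := by
      simp [hR1, Pi.smul_apply, smul_eq_mul]
    have w2 : (t • R1) s₀ a₀ s₁ = t := by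
      simp [hR1, Pi.smul_apply, smul_eq_mul]
    rw [v1, w1, hΦ0 s₀] at e1
    rw [v2, w2, hΦ0 s₀, hΦ0 s₁] at e2
    linarith
  refine ⟨R1, R2, ?_, ?_⟩
  · -- every EPIC-like metric separates R1 and R2
    rintro d ⟨c, n, m, sf, ⟨hclin, -, hciff⟩, hn, hsf, ⟨-, p, l, u, hp, hl, -, hpb⟩, hd⟩
    have hmemc : ∀ R : Reward S A, sf R ∈ Set.range c := by
      intro R
      rcases eq_or_ne (n (c R)) 0 with h | h
      · rw [(hsf R).1 h]; exact ⟨R, rfl⟩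
      · rw [(hsf R).2 h]
        exact ⟨(n (c R))⁻¹ • R, (hclin.map_smul _ _)⟩
    -- sf R1 ≠ sf R2
    have hne : sf R1 ≠ sf R2 := by
      intro heq
      have hshape : ∃ t : ℝ, PotentialShaping γ (t • R1) R2 := by
        have hiff1 := hn.2.1 (c R1) ⟨R1, rfl⟩
        have hiff2 := hn.2.1 (c R2) ⟨R2, rfl⟩
        rcases eq_or_ne (n (c R1)) 0 with h1 | h1 <;>
          rcases eq_or_ne (n (c R2)) 0 with h2 | h2
        · -- both canonical forms are zero
          refine ⟨1, ?_⟩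
          rw [one_smul]
          exact (hciff R1 R2).mp (by rw [hiff1.mp h1, hiff2.mp h2])
        · exfalso
          have hs1 : sf R1 = 0 := by rw [(hsf R1).1 h1]; exact hiff1.mp h1
          have hs2 : sf R2 = (n (c R2))⁻¹ • c R2 := (hsf R2).2 h2
          have : c R2 = 0 := by
            have := heq.symm.trans hs1
            rw [hs2] at this
            rcases smul_eq_zero.mp this with h' | h'
            · exact absurd (inv_eq_zero.mp h') h2
            · exact h'
          exact h2 (hiff2.mpr this)
        · exfalso
          have hs2 : sf R2 = 0 := by rw [(hsf R2).1 h2]; exact hiff2.mp h2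
          have hs1 : sf R1 = (n (c R1))⁻¹ • c R1 := (hsf R1).2 h1
          have : c R1 = 0 := by
            have := heq.trans hs2
            rw [hs1] at this
            rcases smul_eq_zero.mp this with h' | h'
            · exact absurd (inv_eq_zero.mp h') h1
            · exact h'
          exact h1 (hiff1.mpr this)
        · -- both nonzero: positive scaling
          have hpos1 : 0 < n (c R1) := lt_of_le_of_ne (hn.1 (c R1) ⟨R1, rfl⟩) (Ne.symm h1)
          have hpos2 : 0 < n (c R2) := lt_of_le_of_ne (hn.1 (c R2) ⟨R2, rfl⟩) (Ne.symm h2)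
          refine ⟨n (c R2) * (n (c R1))⁻¹, ?_⟩
          have heq' : (n (c R1))⁻¹ • c R1 = (n (c R2))⁻¹ • c R2 := by
            rw [← (hsf R1).2 h1, ← (hsf R2).2 h2]; exact heq
          have hc2 : c ((n (c R2) * (n (c R1))⁻¹) • R1) = c R2 := by
            rw [hclin.map_smul, mul_smul, heq', smul_smul,
              mul_inv_cancel₀ h2, one_smul]
          exact (hciff _ _).mp hc2
      obtain ⟨t, ht⟩ := hshape
      exact key t ht
    -- positivity from admissibility
    rw [hd R1 R2]
    have hb := (hpb (sf R1) (hmemc R1) (sf R2) (hmemc R2)).1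
    have hdiff : sf R1 - sf R2 ≠ 0 := sub_ne_zero_of_ne hne
    have hppos : 0 < p (sf R1 - sf R2) := by
      rcases lt_or_eq_of_le (hp.1 _ (Set.mem_univ _)) with h | h
      · exact h
      · exact absurd ((hp.2.1 _ (Set.mem_univ _)).mp h.symm) hdiff
    calc (0 : ℝ) < l * p (sf R1 - sf R2) := mul_pos hl hppos
      _ ≤ m (sf R1) (sf R2) := hb
  · -- same ordering for every τ and μ0
    intro τ hτ μ0 hμ0 π π'
    have hκ : 0 < 1 + τ s₀ a₀ s₀ := by
      have := (hτ s₀ a₀).1 s₀; linarith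
    have hJ : ∀ ρ : S → A → ℝ, J τ μ0 γ R2 ρ = (1 + τ s₀ a₀ s₀) * J τ μ0 γ R1 ρ := by
      intro ρ
      have collapse : ∀ (w : S → ℝ) (f : S → ℝ),
          (∑ s, ∑ a, ∑ s', w s * ρ s a * τ s a s' *
            (if s = s₀ then (if a = a₀ then f s' else 0) else 0))
            = ∑ s', w s₀ * ρ s₀ a₀ * τ s₀ a₀ s' * f s' := by
        intro w f
        rw [Finset.sum_eq_single s₀]
        · rw [Finset.sum_eq_single a₀]
          · exact Finset.sum_congr rfl (fun s' _ => by rw [if_pos rfl, if_pos rfl])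
          · intro a _ ha
            refine Finset.sum_eq_zero (fun s' _ => ?_)
            rw [if_pos rfl, if_neg ha, mul_zero]
          · intro h; exact absurd (Finset.mem_univ a₀) h
        · intro s _ hs
          refine Finset.sum_eq_zero (fun a _ => Finset.sum_eq_zero (fun s' _ => ?_))
          rw [if_neg hs, mul_zero]
        · intro h; exact absurd (Finset.mem_univ s₀) h
      have hinner : ∀ w : S → ℝ,
          (∑ s, ∑ a, ∑ s', w s * ρ s a * τ s a s' * R2 s a s')
            = (1 + τ s₀ a₀ s₀) *
              ∑ s, ∑ a, ∑ s', w s * ρ s a * τ s a s' * R1 s a s' := by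
        intro w
        have c2 := collapse w (fun s' => if s' = s₀ then (2 : ℝ) else 1)
        have c1 := collapse w (fun _ => (1 : ℝ))
        have e1 : (∑ s', w s₀ * ρ s₀ a₀ * τ s₀ a₀ s' * (1 : ℝ))
            = w s₀ * ρ s₀ a₀ := by
          have hsum : (∑ s', τ s₀ a₀ s') = 1 := (hτ s₀ a₀).2
          calc (∑ s', w s₀ * ρ s₀ a₀ * τ s₀ a₀ s' * (1 : ℝ))
              = w s₀ * ρ s₀ a₀ * ∑ s', τ s₀ a₀ s' := by
                rw [Finset.mul_sum]; exact Finset.sum_congr rfl (fun s' _ => by ring)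
            _ = w s₀ * ρ s₀ a₀ := by rw [hsum, mul_one]
        have e2 : (∑ s', w s₀ * ρ s₀ a₀ * τ s₀ a₀ s' * (if s' = s₀ then (2 : ℝ) else 1))
            = (1 + τ s₀ a₀ s₀) * (w s₀ * ρ s₀ a₀) := by
          have split : ∀ s' : S,
              w s₀ * ρ s₀ a₀ * τ s₀ a₀ s' * (if s' = s₀ then (2 : ℝ) else 1)
              = w s₀ * ρ s₀ a₀ * τ s₀ a₀ s' * 1
                + w s₀ * ρ s₀ a₀ * (if s' = s₀ then τ s₀ a₀ s' else 0) := by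
            intro s'; split_ifs <;> ring
          rw [Finset.sum_congr rfl (fun s' _ => split s'), Finset.sum_add_distrib, e1]
          have : (∑ s', w s₀ * ρ s₀ a₀ * (if s' = s₀ then τ s₀ a₀ s' else 0))
              = w s₀ * ρ s₀ a₀ * τ s₀ a₀ s₀ := by
            rw [← Finset.mul_sum, Finset.sum_ite_eq' Finset.univ s₀ (fun s' => τ s₀ a₀ s'),
              if_pos (Finset.mem_univ s₀)]
          rw [this]; ring
        calc (∑ s, ∑ a, ∑ s', w s * ρ s a * τ s a s' * R2 s a s')
            = (1 + τ s₀ a₀ s₀) * (w s₀ * ρ s₀ a₀) := by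
              simp only [hR2]; rw [c2, e2]
          _ = (1 + τ s₀ a₀ s₀) *
              ∑ s, ∑ a, ∑ s', w s * ρ s a * τ s a s' * R1 s a s' := by
              simp only [hR1]; rw [c1, e1]
      show (∑' t : ℕ, γ ^ t * ∑ s, ∑ a, ∑ s',
          stateDist τ μ0 ρ t s * ρ s a * τ s a s' * R2 s a s')
        = (1 + τ s₀ a₀ s₀) * ∑' t : ℕ, γ ^ t * ∑ s, ∑ a, ∑ s',
          stateDist τ μ0 ρ t s * ρ s a * τ s a s' * R1 s a s'
      rw [← tsum_mul_left]
      exact tsum_congr (fun t => by rw [hinner (stateDist τ μ0 ρ t)]; ring)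
    rw [hJ π.1, hJ π'.1]
    constructor
    · intro h; exact mul_le_mul_of_nonneg_left h (le_of_lt hκ)
    · intro h; exact le_of_mul_le_mul_left h hκ

end RewardPaper
end

section
/- Let D be the product distribution on S×A×S given by D(s,a,s') = D_S(s)·D_A(a)·D_S(s'), and let ‖R‖_{2,D} = √(∑_{(s,a,s')} D(s,a,s')·R(s,a,s')²) be the corresponding weighted L2-norm. If C^EPIC(R1) and C^EPIC(R2) are both nonzero, then D^EPIC(R1,R2) = (1/2)·‖ C^EPIC(R1)/‖C^EPIC(R1)‖_{2,D} − C^EPIC(R2)/‖C^EPIC(R2)‖_{2,D} ‖_{2,D}. -/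
namespace RewardPaper

section EpicAux

variable {S A : Type*} [Fintype S] [Fintype A]

private lemma mul_sum3 (c : ℝ) (F : S → A → S → ℝ) :
    (∑ s, ∑ a, ∑ s', c * F s a s') = c * ∑ s, ∑ a, ∑ s', F s a s' := by
  simp [Finset.mul_sum]

private lemma sum3_split (F G H K : S → A → S → ℝ) :
    (∑ s, ∑ a, ∑ s', (F s a s' + G s a s' - H s a s' - K s a s'))
      = (∑ s, ∑ a, ∑ s', F s a s') + (∑ s, ∑ a, ∑ s', G s a s')
        - (∑ s, ∑ a, ∑ s', H s a s') - (∑ s, ∑ a, ∑ s', K s a s') := by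
  simp [Finset.sum_add_distrib, Finset.sum_sub_distrib]

private lemma sum3_split3 (F G H : S → A → S → ℝ) :
    (∑ s, ∑ a, ∑ s', (F s a s' + G s a s' - H s a s'))
      = (∑ s, ∑ a, ∑ s', F s a s') + (∑ s, ∑ a, ∑ s', G s a s')
        - (∑ s, ∑ a, ∑ s', H s a s') := by
  simp [Finset.sum_add_distrib, Finset.sum_sub_distrib]

private lemma sum3_right (DS : S → ℝ) (DA : A → ℝ)
    (hS : (∑ s, DS s) = 1) (hA : (∑ a, DA a) = 1) (g : S → ℝ) :
    (∑ s, ∑ a, ∑ s', DS s * DA a * DS s' * g s') = ∑ t, DS t * g t := by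
  have h1 : ∀ (s : S) (a : A), (∑ s', DS s * DA a * DS s' * g s')
      = DS s * DA a * ∑ t, DS t * g t := by
    intro s a
    rw [Finset.mul_sum]
    exact Finset.sum_congr rfl fun t _ => by ring
  have h2 : ∀ s : S, (∑ a, DS s * DA a * (∑ t, DS t * g t))
      = DS s * ∑ t, DS t * g t := by
    intro s
    rw [← Finset.sum_mul, ← Finset.mul_sum, hA, mul_one]
  calc (∑ s, ∑ a, ∑ s', DS s * DA a * DS s' * g s')
      = ∑ s, ∑ a, DS s * DA a * (∑ t, DS t * g t) :=
        Finset.sum_congr rfl fun s _ => Finset.sum_congr rfl fun a _ => h1 s a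
    _ = ∑ s, DS s * ∑ t, DS t * g t := Finset.sum_congr rfl fun s _ => h2 s
    _ = ∑ t, DS t * g t := by rw [← Finset.sum_mul, hS, one_mul]

private lemma sum3_left (DS : S → ℝ) (DA : A → ℝ)
    (hS : (∑ s, DS s) = 1) (hA : (∑ a, DA a) = 1) (g : S → ℝ) :
    (∑ s, ∑ a, ∑ s', DS s * DA a * DS s' * g s) = ∑ t, DS t * g t := by
  have h1 : ∀ (s : S) (a : A), (∑ s', DS s * DA a * DS s' * g s)
      = DS s * DA a * g s := by
    intro s a
    have : (∑ s', DS s * DA a * DS s' * g s)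
        = (DS s * DA a * g s) * ∑ s', DS s' := by
      rw [Finset.mul_sum]
      exact Finset.sum_congr rfl fun t _ => by ring
    rw [this, hS, mul_one]
  have h2 : ∀ s : S, (∑ a, DS s * DA a * g s) = DS s * g s := by
    intro s
    have : (∑ a, DS s * DA a * g s) = (DS s * g s) * ∑ a, DA a := by
      rw [Finset.mul_sum]
      exact Finset.sum_congr rfl fun a _ => by ring
    rw [this, hA, mul_one]
  calc (∑ s, ∑ a, ∑ s', DS s * DA a * DS s' * g s)
      = ∑ s, ∑ a, DS s * DA a * g s :=
        Finset.sum_congr rfl fun s _ => Finset.sum_congr rfl fun a _ => h1 s a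
    _ = ∑ s, DS s * g s := Finset.sum_congr rfl fun s _ => h2 s

private lemma sum3_const (DS : S → ℝ) (DA : A → ℝ)
    (hS : (∑ s, DS s) = 1) (hA : (∑ a, DA a) = 1) (c : ℝ) :
    (∑ s, ∑ a, ∑ s', DS s * DA a * DS s' * c) = c := by
  rw [sum3_left DS DA hS hA (fun _ => c), ← Finset.sum_mul, hS, one_mul]

private lemma meanD_CEpic (DS : S → ℝ) (DA : A → ℝ)
    (hS : (∑ s, DS s) = 1) (hA : (∑ a, DA a) = 1) (γ : ℝ) (R : Reward S A) :
    meanD DS DA (CEpic DS DA γ R) = 0 := by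
  set X : S → ℝ := fun t => ∑ a', ∑ σ', DA a' * DS σ' * R t a' σ' with hX
  set M : ℝ := ∑ σ, ∑ a', ∑ σ', DS σ * DA a' * DS σ' * R σ a' σ' with hM
  have hC : ∀ s a s', CEpic DS DA γ R s a s'
      = R s a s' + γ * X s' - X s - γ * M := fun _ _ _ => rfl
  have hXM : (∑ t, DS t * X t) = M := by
    rw [hM]
    refine Finset.sum_congr rfl fun t _ => ?_
    simp only [hX]
    rw [Finset.mul_sum]
    refine Finset.sum_congr rfl fun a' _ => ?_
    rw [Finset.mul_sum]
    exact Finset.sum_congr rfl fun σ' _ => by ring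
  have hMR : meanD DS DA R = M := rfl
  show (∑ s, ∑ a, ∑ s', DS s * DA a * DS s' * CEpic DS DA γ R s a s') = 0
  have step1 : (∑ s, ∑ a, ∑ s', DS s * DA a * DS s' * CEpic DS DA γ R s a s')
      = ∑ s, ∑ a, ∑ s',
          (DS s * DA a * DS s' * R s a s'
            + γ * (DS s * DA a * DS s' * X s')
            - γ * (DS s * DA a * DS s' * M)
            - DS s * DA a * DS s' * X s) := by
    refine Finset.sum_congr rfl fun s _ => Finset.sum_congr rfl fun a _ =>
      Finset.sum_congr rfl fun s' _ => ?_
    rw [hC s a s']; ring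
  rw [step1, sum3_split, mul_sum3, mul_sum3,
    sum3_right DS DA hS hA X, sum3_left DS DA hS hA X,
    sum3_const DS DA hS hA M, hXM]
  have : meanD DS DA R = ∑ s, ∑ a, ∑ s', DS s * DA a * DS s' * R s a s' := rfl
  rw [← this, hMR]
  ring

private lemma sum_sq_pos (DS : S → ℝ) (DA : A → ℝ) (hDSpos : ∀ s, 0 < DS s)
    (hDApos : ∀ a, 0 < DA a) (f : Reward S A) (hf : f ≠ 0) :
    0 < ∑ s, ∑ a, ∑ s', DS s * DA a * DS s' * (f s a s') ^ 2 := by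
  have hnn : ∀ s a s', 0 ≤ DS s * DA a * DS s' * f s a s' ^ 2 := by
    intro s a s'
    have h1 := (hDSpos s).le
    have h2 := (hDApos a).le
    have h3 := (hDSpos s').le
    positivity
  have hnonneg : 0 ≤ ∑ s, ∑ a, ∑ s', DS s * DA a * DS s' * (f s a s') ^ 2 :=
    Finset.sum_nonneg fun s _ => Finset.sum_nonneg fun a _ =>
      Finset.sum_nonneg fun s' _ => hnn s a s'
  rcases hnonneg.lt_or_eq with h | h
  · exact h
  · exfalso
    apply hf
    have h1 := (Finset.sum_eq_zero_iff_of_nonneg fun s _ =>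
      Finset.sum_nonneg fun a _ => Finset.sum_nonneg fun s' _ => hnn s a s').mp h.symm
    funext s a s'
    have h2 := (Finset.sum_eq_zero_iff_of_nonneg fun a _ =>
      Finset.sum_nonneg fun s' _ => hnn s a s').mp (h1 s (Finset.mem_univ s))
    have h3 := (Finset.sum_eq_zero_iff_of_nonneg fun s' _ => hnn s a s').mp
      (h2 a (Finset.mem_univ a))
    have h4 := h3 s' (Finset.mem_univ s')
    have hw : 0 < DS s * DA a * DS s' := by
      have := hDSpos s; have := hDApos a; have := hDSpos s'; positivity
    have h5 : f s a s' ^ 2 = 0 := by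
      rcases mul_eq_zero.mp h4 with h | h
      · exact absurd h hw.ne'
      · exact h
    exact pow_eq_zero_iff (by norm_num) |>.mp h5

end EpicAux

/-- EPIC expressed via the weighted L2 norm. -/
theorem epic_as_weighted_l2
    {S A : Type*} [Fintype S] [Fintype A] [Nonempty S] [Nonempty A]
    (γ : ℝ) (hγ : γ ∈ Set.Ioo (0 : ℝ) 1)
    (DS : S → ℝ) (hDS : IsDist DS) (hDSpos : ∀ s, 0 < DS s)
    (DA : A → ℝ) (hDA : IsDist DA) (hDApos : ∀ a, 0 < DA a)
    (R1 R2 : Reward S A)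
    (h1 : CEpic DS DA γ R1 ≠ 0) (h2 : CEpic DS DA γ R2 ≠ 0) :
    DEpic DS DA γ R1 R2 =
      (1 / 2) * l2NormD DS DA
        ((l2NormD DS DA (CEpic DS DA γ R1))⁻¹ • CEpic DS DA γ R1
          - (l2NormD DS DA (CEpic DS DA γ R2))⁻¹ • CEpic DS DA γ R2) := by
  obtain ⟨-, hS⟩ := hDS
  obtain ⟨-, hA⟩ := hDA
  set f : Reward S A := CEpic DS DA γ R1 with hf
  set g : Reward S A := CEpic DS DA γ R2 with hg
  -- squared norms
  set Qf : ℝ := ∑ s, ∑ a, ∑ s', DS s * DA a * DS s' * (f s a s') ^ 2 with hQf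
  set Qg : ℝ := ∑ s, ∑ a, ∑ s', DS s * DA a * DS s' * (g s a s') ^ 2 with hQg
  set I : ℝ := ∑ s, ∑ a, ∑ s', DS s * DA a * DS s' * f s a s' * g s a s' with hI
  have hQfpos : 0 < Qf := sum_sq_pos DS DA hDSpos hDApos f h1
  have hQgpos : 0 < Qg := sum_sq_pos DS DA hDSpos hDApos g h2
  have hnf : l2NormD DS DA f = Real.sqrt Qf := rfl
  have hng : l2NormD DS DA g = Real.sqrt Qg := rfl
  set nf : ℝ := Real.sqrt Qf with hnfdef
  set ng : ℝ := Real.sqrt Qg with hngdef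
  have hnfpos : 0 < nf := Real.sqrt_pos.mpr hQfpos
  have hngpos : 0 < ng := Real.sqrt_pos.mpr hQgpos
  have hnf2 : nf ^ 2 = Qf := Real.sq_sqrt hQfpos.le
  have hng2 : ng ^ 2 = Qg := Real.sq_sqrt hQgpos.le
  -- mean zero and variance computation
  have hm1 : meanD DS DA f = 0 := meanD_CEpic DS DA hS hA γ R1
  have hm2 : meanD DS DA g = 0 := meanD_CEpic DS DA hS hA γ R2
  have hvarf : varD DS DA f = Qf := by
    simp only [varD, covD, hm1, sub_zero, hQf]
    exact Finset.sum_congr rfl fun s _ => Finset.sum_congr rfl fun a _ =>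
      Finset.sum_congr rfl fun s' _ => by ring
  have hvarg : varD DS DA g = Qg := by
    simp only [varD, covD, hm2, sub_zero, hQg]
    exact Finset.sum_congr rfl fun s _ => Finset.sum_congr rfl fun a _ =>
      Finset.sum_congr rfl fun s' _ => by ring
  have hcov : covD DS DA f g = I := by
    simp only [covD, hm1, hm2, sub_zero, hI]
  have hρ : pearsonD DS DA f g = I / (nf * ng) := by
    rw [pearsonD, hcov, hvarf, hvarg]
  -- the difference reward
  set u : Reward S A := nf⁻¹ • f - ng⁻¹ • g with hu
  have huapp : ∀ s a s', u s a s' = nf⁻¹ * f s a s' - ng⁻¹ * g s a s' :=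
    fun _ _ _ => rfl
  set Qu : ℝ := ∑ s, ∑ a, ∑ s', DS s * DA a * DS s' * (u s a s') ^ 2 with hQu
  have hQuval : Qu = 2 - 2 * (I / (nf * ng)) := by
    have step1 : Qu = ∑ s, ∑ a, ∑ s',
        (nf⁻¹ ^ 2 * (DS s * DA a * DS s' * f s a s' ^ 2)
          + ng⁻¹ ^ 2 * (DS s * DA a * DS s' * g s a s' ^ 2)
          - 2 * nf⁻¹ * ng⁻¹ * (DS s * DA a * DS s' * f s a s' * g s a s')) := by
      rw [hQu]
      refine Finset.sum_congr rfl fun s _ => Finset.sum_congr rfl fun a _ =>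
        Finset.sum_congr rfl fun s' _ => ?_
      rw [huapp s a s']; ring
    rw [step1, sum3_split3, mul_sum3, mul_sum3, mul_sum3, ← hQf, ← hQg, ← hI,
      ← hnf2, ← hng2]
    field_simp
    ring
  have hQunn : 0 ≤ Qu := by
    rw [hQu]
    refine Finset.sum_nonneg fun s _ => Finset.sum_nonneg fun a _ =>
      Finset.sum_nonneg fun s' _ => ?_
    have := (hDSpos s).le; have := (hDApos a).le; have := (hDSpos s').le
    positivity
  have hlhs : DEpic DS DA γ R1 R2 = Real.sqrt (Qu / 4) := by
    rw [DEpic, ← hf, ← hg, hρ]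
    congr 1
    rw [hQuval]
    ring
  have hrhs : l2NormD DS DA u = Real.sqrt Qu := rfl
  rw [hlhs, hnf, hng, ← hu, hrhs, Real.sqrt_div hQunn,
    show Real.sqrt 4 = 2 by rw [show (4 : ℝ) = 2 ^ 2 by norm_num, Real.sqrt_sq (by norm_num : (0:ℝ) ≤ 2)]]
  ring

end RewardPaper
end
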